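/- arXiv:1702.02134 — 5 statements merged into one kernel-verified Lean document; each statement's English description precedes it below -/
import Mathlib

section
/- Let ρ be a nonzero finite symmetric Borel measure on ℝ² (i.e. ρ(−A) = ρ(A) for all Borel sets A) satisfying ∫ |μ|⁶ dρ(μ) < ∞, and whose support is not contained in any line. Define κ : ℝ² → ℝ by κ(s) = ∫ cos(2π⟨s, μ⟩) dρ(μ). Then there exists δ > 0 such that for every triple of points s₁, s₂, s₃ ∈ ℝ² that are pairwise distinct, not collinear, and satisfy max_{1≤i,j≤3} |s_i − s_j| < δ, the 3 × 3 matrix (κ(s_i − s_j))_{1≤i,j≤3} is positive definite (in particular nonsingular). -/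
open MeasureTheory
open scoped RealInnerProductSpace

section ThreePointAux

open Real Filter Topology
open scoped ENNReal

local notation "E2" => EuclideanSpace ℝ (Fin 2)

private lemma two_pi_abs (w : ℝ) : |2*π*w| = 2*π*|w| := by
  rw [abs_mul, abs_of_pos (by positivity : (0:ℝ) < 2*π)]

private lemma sin_small_eq_zero {t : ℝ} (h : Real.sin t = 0) (hb : |t| < Real.pi) : t = 0 := by
  obtain ⟨n, hn⟩ := Real.sin_eq_zero_iff.1 h
  have hπ := Real.pi_pos
  have h1 : |(n : ℝ)| * Real.pi < Real.pi := by
    calc |(n:ℝ)| * Real.pi = |(n:ℝ) * Real.pi| := by rw [abs_mul, abs_of_pos hπ]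
    _ = |t| := by rw [hn]
    _ < Real.pi := hb
  have h2 : |(n : ℝ)| < 1 := by
    by_contra hc
    push_neg at hc
    nlinarith
  have h3 : n = 0 := by
    have h4 : |n| < 1 := by exact_mod_cast h2
    rw [abs_lt] at h4; omega
  rw [h3] at hn; simpa using hn.symm

private lemma sin_small_eq_zero' {u : ℝ} (h : Real.sin (2*π*u) = 0) (hb : |u| < 1/4) :
    u = 0 := by
  have hπ := Real.pi_pos
  have := sin_small_eq_zero h (by rw [two_pi_abs]; nlinarith [abs_nonneg u])
  nlinarith

private lemma cos_small_inj {u u' : ℝ} (hu : |u| < 1/4) (hu' : |u'| < 1/4)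
    (h : Real.cos (2*π*u) = Real.cos (2*π*u')) : u = u' ∨ u = -u' := by
  have hπ := Real.pi_pos
  have h1 : |2*π*u| ∈ Set.Icc (0:ℝ) π := by
    constructor
    · positivity
    · rw [two_pi_abs]; nlinarith [abs_nonneg u]
  have h1' : |2*π*u'| ∈ Set.Icc (0:ℝ) π := by
    constructor
    · positivity
    · rw [two_pi_abs]; nlinarith [abs_nonneg u']
  have h2 : |2*π*u| = |2*π*u'| := by
    apply Real.injOn_cos h1 h1'
    rw [Real.cos_abs, Real.cos_abs]; exact h
  rw [two_pi_abs, two_pi_abs] at h2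
  have h3 : |u| = |u'| := mul_left_cancel₀ (by positivity) h2
  exact abs_eq_abs.1 h3

private lemma core_det {x0 x1 x2 u v u' v' : ℝ}
    (hx : ¬(x0 = 0 ∧ x1 = 0 ∧ x2 = 0))
    (hu : |u| < 1/4) (hv : |v| < 1/4) (huv : |u - v| < 1/4)
    (hu' : |u'| < 1/4) (hv' : |v'| < 1/4) (huv' : |u' - v'| < 1/4)
    (hR : x0 + x1 * Real.cos (2*π*u) + x2 * Real.cos (2*π*v) = 0)
    (hI : x1 * Real.sin (2*π*u) + x2 * Real.sin (2*π*v) = 0)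
    (hR' : x0 + x1 * Real.cos (2*π*u') + x2 * Real.cos (2*π*v') = 0)
    (hI' : x1 * Real.sin (2*π*u') + x2 * Real.sin (2*π*v') = 0) :
    u * v' = u' * v := by
  have pu := Real.sin_sq_add_cos_sq (2*π*u)
  have pv := Real.sin_sq_add_cos_sq (2*π*v)
  have pu' := Real.sin_sq_add_cos_sq (2*π*u')
  have pv' := Real.sin_sq_add_cos_sq (2*π*v')
  by_cases h1 : x1 = 0
  · by_cases h2 : x2 = 0
    · rw [h1, h2] at hR
      exact (hx ⟨by linarith, h1, h2⟩).elim
    · -- v = v' = 0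
      have hsv : Real.sin (2*π*v) = 0 := by
        have : x2 * Real.sin (2*π*v) = 0 := by linear_combination hI - Real.sin (2*π*u) * h1
        exact (mul_eq_zero.1 this).resolve_left h2
      have hsv' : Real.sin (2*π*v') = 0 := by
        have : x2 * Real.sin (2*π*v') = 0 := by linear_combination hI' - Real.sin (2*π*u') * h1
        exact (mul_eq_zero.1 this).resolve_left h2
      rw [sin_small_eq_zero' hsv hv, sin_small_eq_zero' hsv' hv']
      ring
  · by_cases h2 : x2 = 0
    · have hsu : Real.sin (2*π*u) = 0 := by
        have : x1 * Real.sin (2*π*u) = 0 := by linear_combination hI - Real.sin (2*π*v) * h2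
        exact (mul_eq_zero.1 this).resolve_left h1
      have hsu' : Real.sin (2*π*u') = 0 := by
        have : x1 * Real.sin (2*π*u') = 0 := by linear_combination hI' - Real.sin (2*π*v') * h2
        exact (mul_eq_zero.1 this).resolve_left h1
      rw [sin_small_eq_zero' hsu hu, sin_small_eq_zero' hsu' hu']
      ring
    · by_cases h0 : x0 = 0
      · -- u = v and u' = v'
        have key : x1 * Real.sin (2*π*(u-v)) = 0 := by
          rw [show 2*π*(u-v) = 2*π*u - (2*π*v) by ring, Real.sin_sub]
          linear_combination Real.cos (2*π*v) * hI - Real.sin (2*π*v) * hR +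
            Real.sin (2*π*v) * h0
        have key' : x1 * Real.sin (2*π*(u'-v')) = 0 := by
          rw [show 2*π*(u'-v') = 2*π*u' - (2*π*v') by ring, Real.sin_sub]
          linear_combination Real.cos (2*π*v') * hI' - Real.sin (2*π*v') * hR' +
            Real.sin (2*π*v') * h0
        have e1 : u - v = 0 :=
          sin_small_eq_zero' ((mul_eq_zero.1 key).resolve_left h1) huv
        have e2 : u' - v' = 0 :=
          sin_small_eq_zero' ((mul_eq_zero.1 key').resolve_left h1) huv'
        have h'' : u = v := by linarith
        have h' : u' = v' := by linarith
        rw [h'', h']; ring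
      · -- all nonzero
        have E : x0^2 + 2*x0*x1*Real.cos (2*π*u) + x1^2 = x2^2 := by
          linear_combination (x0 + x1*Real.cos (2*π*u) - x2*Real.cos (2*π*v)) * hR +
            (x1*Real.sin (2*π*u) - x2*Real.sin (2*π*v)) * hI - x1^2 * pu + x2^2 * pv
        have E' : x0^2 + 2*x0*x1*Real.cos (2*π*u') + x1^2 = x2^2 := by
          linear_combination (x0 + x1*Real.cos (2*π*u') - x2*Real.cos (2*π*v')) * hR' +
            (x1*Real.sin (2*π*u') - x2*Real.sin (2*π*v')) * hI' - x1^2 * pu' + x2^2 * pv'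
        have F : x0^2 + 2*x0*x2*Real.cos (2*π*v) + x2^2 = x1^2 := by
          linear_combination (x0 + x2*Real.cos (2*π*v) - x1*Real.cos (2*π*u)) * hR +
            (x2*Real.sin (2*π*v) - x1*Real.sin (2*π*u)) * hI - x2^2 * pv + x1^2 * pu
        have F' : x0^2 + 2*x0*x2*Real.cos (2*π*v') + x2^2 = x1^2 := by
          linear_combination (x0 + x2*Real.cos (2*π*v') - x1*Real.cos (2*π*u')) * hR' +
            (x2*Real.sin (2*π*v') - x1*Real.sin (2*π*u')) * hI' - x2^2 * pv' + x1^2 * pu'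
        have hcu : Real.cos (2*π*u) = Real.cos (2*π*u') := by
          have h01 : (2*x0*x1) ≠ 0 := by
            simp [h0, h1]
          have : 2*x0*x1 * Real.cos (2*π*u) = 2*x0*x1 * Real.cos (2*π*u') := by
            linear_combination E - E'
          exact mul_left_cancel₀ h01 this
        have hcv : Real.cos (2*π*v) = Real.cos (2*π*v') := by
          have h02 : (2*x0*x2) ≠ 0 := by simp [h0, h2]
          have : 2*x0*x2 * Real.cos (2*π*v) = 2*x0*x2 * Real.cos (2*π*v') := by
            linear_combination F - F'
          exact mul_left_cancel₀ h02 this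
        rcases cos_small_inj hu hu' hcu with hdu | hdu <;>
          rcases cos_small_inj hv hv' hcv with hdv | hdv
        · rw [hdu, hdv]
        · -- u = u', v = -v' : show sin(2πv') = 0 hence v' = 0 and v = 0
          rw [hdu, hdv, show 2*π*(-v') = -(2*π*v') by ring, Real.sin_neg] at hI
          have hsv' : Real.sin (2*π*v') = 0 := by
            have : (2*x2) * Real.sin (2*π*v') = 0 := by linear_combination hI' - hI
            exact (mul_eq_zero.1 this).resolve_left (by simpa using h2)
          have hv'0 : v' = 0 := sin_small_eq_zero' hsv' hv'
          rw [hdv, hv'0]; ring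
        · -- u = -u', v = v'
          rw [hdu, hdv, show 2*π*(-u') = -(2*π*u') by ring, Real.sin_neg] at hI
          have hsu' : Real.sin (2*π*u') = 0 := by
            have : (2*x1) * Real.sin (2*π*u') = 0 := by linear_combination hI' - hI
            exact (mul_eq_zero.1 this).resolve_left (by simpa using h1)
          have hu'0 : u' = 0 := sin_small_eq_zero' hsu' hu'
          rw [hdu, hu'0, hdv]; ring
        · rw [hdu, hdv]; ring

private lemma inner2 (n x : E2) : ⟪n, x⟫ = n 0 * x 0 + n 1 * x 1 := by
  simp [PiLp.inner_apply, Fin.sum_univ_two, RCLike.inner_apply, mul_comm]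

private lemma lin_solve {n m x : E2} (hd : n 0 * m 1 - n 1 * m 0 ≠ 0)
    (h1 : ⟪n, x⟫ = (0:ℝ)) (h2 : ⟪m, x⟫ = (0:ℝ)) : x = 0 := by
  rw [inner2] at h1 h2
  have hx0 : x 0 = 0 := by
    have : (n 0 * m 1 - n 1 * m 0) * x 0 = 0 := by linear_combination m 1 * h1 - n 1 * h2
    exact (mul_eq_zero.1 this).resolve_left hd
  have hx1 : x 1 = 0 := by
    have : (n 0 * m 1 - n 1 * m 0) * x 1 = 0 := by linear_combination n 0 * h2 - m 0 * h1
    exact (mul_eq_zero.1 this).resolve_left hd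
  ext i
  fin_cases i <;> simp [hx0, hx1]

private lemma ker_eq {n m : E2} (hd : n 0 * m 1 - n 1 * m 0 = 0) (hn : n ≠ 0) (hm : m ≠ 0) :
    {x : E2 | ⟪n, x⟫ = (0:ℝ)} = {x : E2 | ⟪m, x⟫ = (0:ℝ)} := by
  have hco : ∀ p q : E2, p 0 * q 1 - p 1 * q 0 = 0 → p ≠ 0 →
      ∀ x : E2, ⟪p, x⟫ = (0:ℝ) → ⟪q, x⟫ = (0:ℝ) := by
    intro p q hpq hp x hx
    rw [inner2] at hx ⊢
    have hp' : p 0 ≠ 0 ∨ p 1 ≠ 0 := by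
      by_contra hc
      push_neg at hc
      exact hp (by ext i; fin_cases i <;> simp [hc.1, hc.2])
    rcases hp' with hp0 | hp1
    · have : p 0 * (q 0 * x 0 + q 1 * x 1) = 0 := by
        linear_combination q 0 * hx + x 1 * hpq
      exact (mul_eq_zero.1 this).resolve_left hp0
    · have : p 1 * (q 0 * x 0 + q 1 * x 1) = 0 := by
        linear_combination q 1 * hx - x 0 * hpq
      exact (mul_eq_zero.1 this).resolve_left hp1
  apply Set.eq_of_subset_of_subset
  · exact fun x hx => hco n m hd hn x hx
  · exact fun x hx => hco m n (by linarith) hm x hx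

private lemma exists_eta (ρ : Measure E2) [IsFiniteMeasure ρ]
    (hline : ∀ n : E2, n ≠ 0 → ρ {x : E2 | ⟪n, x⟫ = (0:ℝ)}ᶜ ≠ 0) :
    ∃ η : ℝ≥0∞, 0 < η ∧ ∀ n : E2, n ≠ 0 → η ≤ ρ {x : E2 | ⟪n, x⟫ = (0:ℝ)}ᶜ := by
  set m' := ρ ({(0 : E2)}ᶜ) with hm'def
  have hsingle : (EuclideanSpace.single 0 (1:ℝ) : E2) ≠ 0 := by
    intro h
    have := congrArg (fun v : E2 => v 0) h
    simp [EuclideanSpace.single_apply] at this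
  have hm' : m' ≠ 0 := by
    intro h
    apply hline (EuclideanSpace.single 0 (1:ℝ)) hsingle
    refine measure_mono_null ?_ h
    intro x hx hx0
    rw [Set.mem_singleton_iff] at hx0
    exact hx (by simp [hx0])
  have hm'top : m' ≠ ⊤ := measure_ne_top ρ _
  have hhalf_pos : 0 < m' / 2 := ENNReal.div_pos hm' (by norm_num)
  have hhalf_top : m' / 2 ≠ ⊤ := by
    intro h
    exact hm'top (by simpa using (ENNReal.div_eq_top.1 h))
  by_cases hbig : ∃ n : E2, n ≠ 0 ∧ m' / 2 < ρ ({x : E2 | ⟪n, x⟫ = (0:ℝ)} \ {0})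
  · obtain ⟨n₁, hn₁, hb⟩ := hbig
    refine ⟨min (m' / 2) (ρ {x : E2 | ⟪n₁, x⟫ = (0:ℝ)}ᶜ), ?_, ?_⟩
    · exact lt_min hhalf_pos (pos_iff_ne_zero.2 (hline n₁ hn₁))
    · intro n hn
      by_cases hd : n 0 * n₁ 1 - n 1 * n₁ 0 = 0
      · rw [ker_eq hd hn hn₁]
        exact min_le_right _ _
      · refine le_trans (min_le_left _ _) (le_trans hb.le (measure_mono ?_))
        rintro x ⟨hx1, hx2⟩ hx
        exact hx2 (by simpa using lin_solve hd hx hx1)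
  · push_neg at hbig
    refine ⟨m' / 2, hhalf_pos, fun n hn => ?_⟩
    have hsplit : m' ≤ ρ ({x : E2 | ⟪n, x⟫ = (0:ℝ)} \ {0}) + ρ {x : E2 | ⟪n, x⟫ = (0:ℝ)}ᶜ := by
      refine le_trans (measure_mono ?_) (measure_union_le _ _)
      intro x hx
      by_cases h : ⟪n, x⟫ = (0:ℝ)
      · exact Or.inl ⟨h, hx⟩
      · exact Or.inr h
    have h2 := hbig n hn
    have hfin : m' / 2 + m' / 2 ≤ m' / 2 + ρ {x : E2 | ⟪n, x⟫ = (0:ℝ)}ᶜ := by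
      rw [ENNReal.add_halves]
      exact le_trans hsplit (add_le_add h2 le_rfl)
    exact (ENNReal.add_le_add_iff_left hhalf_top).1 hfin

private lemma exists_R (ρ : Measure E2) [IsFiniteMeasure ρ] (η : ℝ≥0∞) (hη : 0 < η) :
    ∃ R : ℝ, 0 < R ∧ ρ {x : E2 | R < ‖x‖} < η := by
  have htend := tendsto_measure_iInter_atTop (μ := ρ)
    (s := fun k : ℕ => {x : E2 | (k : ℝ) < ‖x‖})
    (fun k => ((isOpen_lt continuous_const continuous_norm).measurableSet).nullMeasurableSet)
    (fun k l hkl x hx => lt_of_le_of_lt ((Nat.cast_le (α := ℝ)).mpr hkl) hx)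
    ⟨0, measure_ne_top ρ _⟩
  have hempty : (⋂ k : ℕ, {x : E2 | (k : ℝ) < ‖x‖}) = ∅ := by
    ext x
    simp only [Set.mem_iInter, Set.mem_setOf_eq, Set.mem_empty_iff_false, iff_false, not_forall,
      not_lt]
    obtain ⟨k, hk⟩ := exists_nat_gt ‖x‖
    exact ⟨k, hk.le⟩
  rw [hempty, measure_empty] at htend
  obtain ⟨k, hk⟩ := (htend.eventually_lt_const hη).exists
  refine ⟨max k 1, by positivity, lt_of_le_of_lt (measure_mono ?_) hk⟩
  intro x hx
  exact lt_of_le_of_lt (le_max_left (k:ℝ) 1) hx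

end ThreePointAux

/-- Local three-point non-degeneracy. Let `ρ` be a nonzero finite
symmetric Borel measure on `ℝ²` with finite sixth moment whose support is not contained
in any line, and let `κ(s) = ∫ cos(2π⟨s, μ⟩) dρ(μ)`. Then there is `δ > 0` such that for
all pairwise distinct, non-collinear `s₁, s₂, s₃` with pairwise distances `< δ`, the
matrix `(κ(sᵢ - sⱼ))` is positive definite. -/
theorem three_point_nondegeneracy (ρ : Measure (EuclideanSpace ℝ (Fin 2)))
    [IsFiniteMeasure ρ] (hne : ρ ≠ 0)
    (hsym : ρ.map (fun x => -x) = ρ)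
    (hmom : Integrable (fun μ : EuclideanSpace ℝ (Fin 2) => ‖μ‖ ^ 6) ρ)
    (hline : ∀ (a : EuclideanSpace ℝ (Fin 2)) (b : ℝ), a ≠ 0 →
      ρ {x : EuclideanSpace ℝ (Fin 2) | ⟪a, x⟫ = b}ᶜ ≠ 0) :
    ∃ δ > (0 : ℝ), ∀ s : Fin 3 → EuclideanSpace ℝ (Fin 2),
      Function.Injective s →
      ¬ Collinear ℝ (Set.range s) →
      (∀ i j, dist (s i) (s j) < δ) →
      (Matrix.of fun i j =>
        ∫ μ, Real.cos (2 * Real.pi * ⟪s i - s j, μ⟫) ∂ρ).PosDef := by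
  classical
  obtain ⟨η, hη, hηle⟩ := exists_eta ρ (fun n hn => hline n 0 hn)
  obtain ⟨R, hRpos, hRlt⟩ := exists_R ρ η hη
  refine ⟨1/(4*R), by positivity, ?_⟩
  intro s hinj hcol hdist
  refine Matrix.PosDef.of_dotProduct_mulVec_pos ?_ ?_
  · -- Hermitian
    ext i j
    simp only [Matrix.conjTranspose_apply, Matrix.of_apply, star_trivial]
    congr 1
    funext μ
    rw [show s j - s i = -(s i - s j) by abel, inner_neg_left, mul_neg, Real.cos_neg]
  · intro x hx
    have hstar : star x = x := by funext i; simp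
    rw [hstar]
    have hxne : ¬(x 0 = 0 ∧ x 1 = 0 ∧ x 2 = 0) := by
      rintro ⟨h0, h1, h2⟩
      exact hx (by funext i; fin_cases i <;> simp [h0, h1, h2])
    have hcont : ∀ i : Fin 3, Continuous fun μ : EuclideanSpace ℝ (Fin 2) =>
        2*Real.pi*⟪s i, μ⟫ := fun i =>
      continuous_const.mul (Continuous.inner continuous_const continuous_id)
    set g : Fin 3 → Fin 3 → EuclideanSpace ℝ (Fin 2) → ℝ := fun i j μ =>
      Real.cos (2*Real.pi*⟪s i, μ⟫) * Real.cos (2*Real.pi*⟪s j, μ⟫) +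
      Real.sin (2*Real.pi*⟪s i, μ⟫) * Real.sin (2*Real.pi*⟪s j, μ⟫) with hg
    have hgint : ∀ i j : Fin 3, Integrable (g i j) ρ := by
      intro i j
      refine Integrable.mono' (integrable_const (2:ℝ)) ?_ ?_
      · exact (((Real.continuous_cos.comp (hcont i)).mul (Real.continuous_cos.comp (hcont j))).add
          ((Real.continuous_sin.comp (hcont i)).mul (Real.continuous_sin.comp (hcont j)))).aestronglyMeasurable
      · refine Filter.Eventually.of_forall fun μ => ?_
        rw [Real.norm_eq_abs, hg]
        have b1 := mul_le_one₀ (Real.abs_cos_le_one (2*Real.pi*⟪s i, μ⟫)) (abs_nonneg _)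
          (Real.abs_cos_le_one (2*Real.pi*⟪s j, μ⟫))
        have b2 := mul_le_one₀ (Real.abs_sin_le_one (2*Real.pi*⟪s i, μ⟫)) (abs_nonneg _)
          (Real.abs_sin_le_one (2*Real.pi*⟪s j, μ⟫))
        calc |Real.cos (2*Real.pi*⟪s i, μ⟫) * Real.cos (2*Real.pi*⟪s j, μ⟫) +
              Real.sin (2*Real.pi*⟪s i, μ⟫) * Real.sin (2*Real.pi*⟪s j, μ⟫)|
            ≤ |Real.cos (2*Real.pi*⟪s i, μ⟫) * Real.cos (2*Real.pi*⟪s j, μ⟫)| +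
              |Real.sin (2*Real.pi*⟪s i, μ⟫) * Real.sin (2*Real.pi*⟪s j, μ⟫)| := abs_add_le _ _
          _ ≤ 2 := by rw [abs_mul, abs_mul]; linarith
    have hentry : ∀ i j : Fin 3,
        (∫ μ, Real.cos (2 * Real.pi * ⟪s i - s j, μ⟫) ∂ρ) = ∫ μ, g i j μ ∂ρ := by
      intro i j
      congr 1
      funext μ
      rw [show 2 * Real.pi * ⟪s i - s j, μ⟫ =
        2*Real.pi*⟪s i, μ⟫ - 2*Real.pi*⟪s j, μ⟫ by rw [inner_sub_left]; ring,
        Real.cos_sub, hg]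
    set C : EuclideanSpace ℝ (Fin 2) → ℝ := fun μ =>
      x 0 * Real.cos (2*Real.pi*⟪s 0, μ⟫) + x 1 * Real.cos (2*Real.pi*⟪s 1, μ⟫) +
      x 2 * Real.cos (2*Real.pi*⟪s 2, μ⟫) with hC
    set S : EuclideanSpace ℝ (Fin 2) → ℝ := fun μ =>
      x 0 * Real.sin (2*Real.pi*⟪s 0, μ⟫) + x 1 * Real.sin (2*Real.pi*⟪s 1, μ⟫) +
      x 2 * Real.sin (2*Real.pi*⟪s 2, μ⟫) with hS
    have hint1 : ∀ i j : Fin 3, Integrable (fun μ => x i * (g i j μ * x j)) ρ :=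
      fun i j => ((hgint i j).mul_const _).const_mul _
    have hQ : dotProduct x (Matrix.mulVec (Matrix.of fun i j =>
        ∫ μ, Real.cos (2 * Real.pi * ⟪s i - s j, μ⟫) ∂ρ) x)
        = ∫ μ, ((C μ)^2 + (S μ)^2) ∂ρ := by
      simp only [dotProduct, Matrix.mulVec, Matrix.of_apply, hentry, Finset.mul_sum]
      calc ∑ i : Fin 3, ∑ j : Fin 3, x i * ((∫ μ, g i j μ ∂ρ) * x j)
          = ∑ i : Fin 3, ∑ j : Fin 3, ∫ μ, x i * (g i j μ * x j) ∂ρ := by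
            refine Finset.sum_congr rfl fun i _ => Finset.sum_congr rfl fun j _ => ?_
            rw [← integral_mul_const, ← integral_const_mul]
        _ = ∑ i : Fin 3, ∫ μ, ∑ j : Fin 3, x i * (g i j μ * x j) ∂ρ :=
            Finset.sum_congr rfl fun i _ =>
              (integral_finset_sum _ fun j _ => hint1 i j).symm
        _ = ∫ μ, ∑ i : Fin 3, ∑ j : Fin 3, x i * (g i j μ * x j) ∂ρ :=
            (integral_finset_sum _ fun i _ =>
              integrable_finset_sum _ fun j _ => hint1 i j).symm
        _ = ∫ μ, ((C μ)^2 + (S μ)^2) ∂ρ := by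
            congr 1
            funext μ
            simp only [hC, hS, hg, Fin.sum_univ_three]
            ring
    rw [hQ]
    have hFnonneg : ∀ μ, 0 ≤ (C μ)^2 + (S μ)^2 := fun μ => by positivity
    have hFint : Integrable (fun μ => (C μ)^2 + (S μ)^2) ρ := by
      have hfe : (fun μ => (C μ)^2 + (S μ)^2) =
          fun μ => ∑ i : Fin 3, ∑ j : Fin 3, x i * (g i j μ * x j) := by
        funext μ
        simp only [hC, hS, hg, Fin.sum_univ_three]
        ring
      rw [hfe]
      exact integrable_finset_sum _ fun i _ => integrable_finset_sum _ fun j _ => hint1 i j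
    rcases (integral_nonneg (f := fun μ => (C μ)^2 + (S μ)^2) hFnonneg).lt_or_eq with hpos | heq
    · exact hpos
    · exfalso
      have hae : (fun μ => (C μ)^2 + (S μ)^2) =ᵐ[ρ] 0 :=
        (integral_eq_zero_iff_of_nonneg hFnonneg hFint).1 heq.symm
      have hnull : ρ {μ : EuclideanSpace ℝ (Fin 2) | ¬((C μ)^2 + (S μ)^2 = 0)} = 0 := by
        have := hae
        rw [Filter.EventuallyEq, ae_iff] at this
        simpa using this
      set a : EuclideanSpace ℝ (Fin 2) := s 1 - s 0 with haa
      set b : EuclideanSpace ℝ (Fin 2) := s 2 - s 0 with hbb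
      have ha0 : a ≠ 0 := sub_ne_zero.2 (hinj.ne (by decide))
      have hd : a 0 * b 1 - a 1 * b 0 ≠ 0 := by
        intro hd0
        apply hcol
        have hsub2 : Set.range s ⊆ {s 0, s 1, s 2} := by
          rintro _ ⟨i, rfl⟩
          fin_cases i <;> simp
        refine Collinear.subset hsub2 ?_
        have hmem : s 0 ∈ ({s 0, s 1, s 2} : Set (EuclideanSpace ℝ (Fin 2))) := by simp
        rw [collinear_iff_of_mem hmem]
        have hac : a 0 ≠ 0 ∨ a 1 ≠ 0 := by
          by_contra hcc
          push_neg at hcc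
          exact ha0 (by ext i; fin_cases i <;> simp [hcc.1, hcc.2])
        obtain ⟨c, hc⟩ : ∃ c : ℝ, b = c • a := by
          rcases hac with h | h
          · refine ⟨b 0 / a 0, ?_⟩
            ext i
            fin_cases i
            · show b 0 = (b 0 / a 0) • a 0
              rw [smul_eq_mul]
              field_simp
            · show b 1 = (b 0 / a 0) • a 1
              rw [smul_eq_mul]
              field_simp
              linear_combination hd0
          · refine ⟨b 1 / a 1, ?_⟩
            ext i
            fin_cases i
            · show b 0 = (b 1 / a 1) • a 0
              rw [smul_eq_mul]
              field_simp
              linear_combination -hd0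
            · show b 1 = (b 1 / a 1) • a 1
              rw [smul_eq_mul]
              field_simp
        refine ⟨a, ?_⟩
        rintro p hp
        simp only [Set.mem_insert_iff, Set.mem_singleton_iff] at hp
        rcases hp with rfl | rfl | rfl
        · exact ⟨0, by simp⟩
        · exact ⟨1, by rw [one_smul, vadd_eq_add, haa]; abel⟩
        · exact ⟨c, by rw [vadd_eq_add, ← hc, hbb]; abel⟩
      set Z : Set (EuclideanSpace ℝ (Fin 2)) :=
        {μ | ‖μ‖ ≤ R ∧ (C μ)^2 + (S μ)^2 = 0} with hZ
      have hbound : ∀ w : EuclideanSpace ℝ (Fin 2), ‖w‖ < 1/(4*R) →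
          ∀ μ : EuclideanSpace ℝ (Fin 2), ‖μ‖ ≤ R → |⟪w, μ⟫| < 1/4 := by
        intro w hw μ hμ
        calc |⟪w, μ⟫| ≤ ‖w‖ * ‖μ‖ := abs_real_inner_le_norm w μ
          _ ≤ ‖w‖ * R := mul_le_mul_of_nonneg_left hμ (norm_nonneg w)
          _ < 1/4 := by
            rw [show (1:ℝ)/4 = (1/(4*R)) * R by field_simp]
            exact mul_lt_mul_of_pos_right hw hRpos
      have hna : ‖a‖ < 1/(4*R) := by
        rw [haa, ← dist_eq_norm]
        exact hdist 1 0
      have hnb : ‖b‖ < 1/(4*R) := by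
        rw [hbb, ← dist_eq_norm]
        exact hdist 2 0
      have hnab : ‖a - b‖ < 1/(4*R) := by
        rw [haa, hbb, show s 1 - s 0 - (s 2 - s 0) = s 1 - s 2 by abel, ← dist_eq_norm]
        exact hdist 1 2
      have hRI : ∀ μ ∈ Z,
          (x 0 + x 1 * Real.cos (2*Real.pi*⟪a, μ⟫) + x 2 * Real.cos (2*Real.pi*⟪b, μ⟫) = 0) ∧
          (x 1 * Real.sin (2*Real.pi*⟪a, μ⟫) + x 2 * Real.sin (2*Real.pi*⟪b, μ⟫) = 0) := by
        intro μ hμ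
        obtain ⟨-, hF0⟩ := hμ
        have hC2 : (C μ)^2 = 0 :=
          le_antisymm (by nlinarith [sq_nonneg (S μ)]) (sq_nonneg _)
        have hS2 : (S μ)^2 = 0 :=
          le_antisymm (by nlinarith [sq_nonneg (C μ)]) (sq_nonneg _)
        have hCμ : C μ = 0 := (pow_eq_zero_iff two_ne_zero).1 hC2
        have hSμ : S μ = 0 := (pow_eq_zero_iff two_ne_zero).1 hS2
        simp only [hC] at hCμ
        simp only [hS] at hSμ
        have ea : 2*Real.pi*⟪a, μ⟫ = 2*Real.pi*⟪s 1, μ⟫ - 2*Real.pi*⟪s 0, μ⟫ := by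
          rw [haa, inner_sub_left]; ring
        have eb : 2*Real.pi*⟪b, μ⟫ = 2*Real.pi*⟪s 2, μ⟫ - 2*Real.pi*⟪s 0, μ⟫ := by
          rw [hbb, inner_sub_left]; ring
        constructor
        · rw [ea, eb, Real.cos_sub, Real.cos_sub]
          linear_combination Real.cos (2*Real.pi*⟪s 0, μ⟫) * hCμ +
            Real.sin (2*Real.pi*⟪s 0, μ⟫) * hSμ -
            x 0 * Real.sin_sq_add_cos_sq (2*Real.pi*⟪s 0, μ⟫)
        · rw [ea, eb, Real.sin_sub, Real.sin_sub]
          linear_combination Real.cos (2*Real.pi*⟪s 0, μ⟫) * hSμ -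
            Real.sin (2*Real.pi*⟪s 0, μ⟫) * hCμ
      have hdet2 : ∀ μ ∈ Z, ∀ μ' ∈ Z, μ 0 * μ' 1 - μ 1 * μ' 0 = 0 := by
        intro μ hμ μ' hμ'
        have h1 := hRI μ hμ
        have h2 := hRI μ' hμ'
        have huvμ : |⟪a, μ⟫ - ⟪b, μ⟫| < 1/4 := by
          rw [← inner_sub_left]
          exact hbound _ hnab μ hμ.1
        have huvμ' : |⟪a, μ'⟫ - ⟪b, μ'⟫| < 1/4 := by
          rw [← inner_sub_left]
          exact hbound _ hnab μ' hμ'.1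
        have hcd := core_det hxne (hbound a hna μ hμ.1) (hbound b hnb μ hμ.1) huvμ
          (hbound a hna μ' hμ'.1) (hbound b hnb μ' hμ'.1) huvμ' h1.1 h1.2 h2.1 h2.2
        have hexp : (a 0 * b 1 - a 1 * b 0) * (μ 0 * μ' 1 - μ 1 * μ' 0) = 0 := by
          rw [inner2, inner2, inner2, inner2] at hcd
          linear_combination hcd
        exact (mul_eq_zero.1 hexp).resolve_left hd
      obtain ⟨n, hn0, hker⟩ : ∃ n : EuclideanSpace ℝ (Fin 2), n ≠ 0 ∧
          ∀ μ ∈ Z, ⟪n, μ⟫ = (0:ℝ) := by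
        by_cases hex : ∃ μ₀ ∈ Z, μ₀ ≠ (0 : EuclideanSpace ℝ (Fin 2))
        · obtain ⟨μ₀, hμ₀Z, hμ₀⟩ := hex
          refine ⟨(EuclideanSpace.single 0 (-(μ₀ 1)) + EuclideanSpace.single 1 (μ₀ 0) :
            EuclideanSpace ℝ (Fin 2)), ?_, ?_⟩
          · intro h
            apply hμ₀
            have h0 := congrArg (fun v : EuclideanSpace ℝ (Fin 2) => v 0) h
            have h1 := congrArg (fun v : EuclideanSpace ℝ (Fin 2) => v 1) h
            simp [EuclideanSpace.single_apply] at h0 h1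
            ext i
            fin_cases i <;> simp [h0, h1]
          · intro μ hμ
            rw [inner2]
            have hq := hdet2 μ₀ hμ₀Z μ hμ
            simp [EuclideanSpace.single_apply]
            linarith
        · push_neg at hex
          refine ⟨a, ha0, fun μ hμ => ?_⟩
          rw [hex μ hμ]
          exact inner_zero_right a
      have hsub : {y : EuclideanSpace ℝ (Fin 2) | ⟪n, y⟫ = (0:ℝ)}ᶜ ⊆
          {μ : EuclideanSpace ℝ (Fin 2) | R < ‖μ‖} ∪
          {μ : EuclideanSpace ℝ (Fin 2) | ¬((C μ)^2 + (S μ)^2 = 0)} := by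
        intro μ hμ
        by_cases hr : R < ‖μ‖
        · exact Or.inl hr
        · exact Or.inr fun hF => hμ (hker μ ⟨le_of_not_gt hr, hF⟩)
      have hle : ρ {y : EuclideanSpace ℝ (Fin 2) | ⟪n, y⟫ = (0:ℝ)}ᶜ ≤
          ρ {μ : EuclideanSpace ℝ (Fin 2) | R < ‖μ‖} := by
        calc ρ {y : EuclideanSpace ℝ (Fin 2) | ⟪n, y⟫ = (0:ℝ)}ᶜ
            ≤ ρ ({μ : EuclideanSpace ℝ (Fin 2) | R < ‖μ‖} ∪
              {μ : EuclideanSpace ℝ (Fin 2) | ¬((C μ)^2 + (S μ)^2 = 0)}) := measure_mono hsub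
          _ ≤ ρ {μ : EuclideanSpace ℝ (Fin 2) | R < ‖μ‖} +
              ρ {μ : EuclideanSpace ℝ (Fin 2) | ¬((C μ)^2 + (S μ)^2 = 0)} :=
            measure_union_le _ _
          _ = ρ {μ : EuclideanSpace ℝ (Fin 2) | R < ‖μ‖} := by rw [hnull, add_zero]
      exact absurd ((hηle n hn0).trans_lt (hle.trans_lt hRlt)) (lt_irrefl η)
end

section
/- Fix δ ∈ (0, 1) and let f, g : ℝ₊ → ℝ be functions such that for every x ∈ (0, 1), |f(x) − 1 + x²| < δx⁴ and |g(x) + 2x| < δx³. For x ∈ (0, 1) define the 2 × 2 matrices A^x = [[1, f(x)], [f(x), 1]] and B^x = [[0, g(x)], [−g(x), 0]], let C = (c_{ij}) be any 2 × 2 real matrix with c₁₁ = c₂₂ = 2, and set μ^x := B^x (A^x)⁻¹ (1, 1)ᵀ and D^x := C − (B^x)ᵀ (A^x)⁻¹ B^x, with diagonal entries d^x_{11}, d^x_{22}. (Under these hypotheses |f(x)| < 1 for all x ∈ (0, 1), so det A^x = 1 − f(x)² > 0 and A^x is invertible.) Then there exists a constant c = c(δ) > 0 such that for every x ∈ (0,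 1): max_{i=1,2} max{(μ^x_i)⁴, (d^x_{ii})²} / det A^x < c·x². -/
set_option maxHeartbeats 1000000


open Matrix

/-- The 2×2 Kac–Rice matrix computation: with `f`, `g` approximating
`1 - x²` and `-2x` to the stated orders, `A^x = [[1, f x], [f x, 1]]`,
`B^x = [[0, g x], [-g x, 0]]`, `μ^x = B^x (A^x)⁻¹ (1,1)ᵀ` and
`D^x = C - (B^x)ᵀ (A^x)⁻¹ B^x` (where `C` has diagonal entries `2`), there is
`c = c(δ) > 0` with `maxᵢ max{(μ^x_i)⁴, (d^x_{ii})²} / det A^x < c x²` for `x ∈ (0,1)`. -/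
theorem kac_rice_two_point_matrix_bound (δ : ℝ) (hδ : δ ∈ Set.Ioo (0 : ℝ) 1)
    (f g : ℝ → ℝ)
    (hf : ∀ x ∈ Set.Ioo (0 : ℝ) 1, |f x - 1 + x ^ 2| < δ * x ^ 4)
    (hg : ∀ x ∈ Set.Ioo (0 : ℝ) 1, |g x + 2 * x| < δ * x ^ 3)
    (C : Matrix (Fin 2) (Fin 2) ℝ) (hC0 : C 0 0 = 2) (hC1 : C 1 1 = 2) :
    ∃ c > (0 : ℝ), ∀ x ∈ Set.Ioo (0 : ℝ) 1,
      let A : Matrix (Fin 2) (Fin 2) ℝ := !![1, f x; f x, 1]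
      let B : Matrix (Fin 2) (Fin 2) ℝ := !![0, g x; -(g x), 0]
      let μv : Fin 2 → ℝ := (B * A⁻¹).mulVec ![1, 1]
      let D : Matrix (Fin 2) (Fin 2) ℝ := C - Bᵀ * A⁻¹ * B
      (max (max ((μv 0) ^ 4) ((D 0 0) ^ 2)) (max ((μv 1) ^ 4) ((D 1 1) ^ 2))) / A.det
        < c * x ^ 2 := by
  obtain ⟨hδ0, hδ1⟩ := hδ
  have h1δ : (0:ℝ) < 1 - δ := by linarith
  have h6 : (0:ℝ) < (1 - δ) ^ 6 := by positivity
  refine ⟨200 / (1 - δ) ^ 6, by positivity, ?_⟩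
  intro x hx
  obtain ⟨hx0, hx1⟩ := hx
  have hF := hf x ⟨hx0, hx1⟩
  have hG := hg x ⟨hx0, hx1⟩
  set F := f x with hFdef
  set G := g x with hGdef
  rw [abs_lt] at hF hG
  obtain ⟨hFl, hFu⟩ := hF
  obtain ⟨hGl, hGu⟩ := hG
  intro A B μv D
  have hdet : A.det = 1 - F ^ 2 := by
    simp [A, Matrix.det_fin_two_of]; ring
  have hx2 : x ^ 2 < 1 := by nlinarith
  have hx4 : x ^ 4 ≤ x ^ 2 := by nlinarith
  have hx6 : x ^ 6 ≤ x ^ 4 := by nlinarith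
  have hx8 : x ^ 8 ≤ x ^ 6 := by nlinarith
  have hx40 : (0:ℝ) < x ^ 4 := by positivity
  -- bounds on F and G
  have haU : F - 1 + x ^ 2 < x ^ 4 := by nlinarith
  have haL : -(x ^ 4) < F - 1 + x ^ 2 := by nlinarith
  have heU : G + 2 * x < x ^ 3 := by nlinarith
  have heL : -(x ^ 3) < G + 2 * x := by nlinarith
  have hF1 : F < 1 := by nlinarith
  have hF2 : -1 < F := by nlinarith
  have hd0 : (0:ℝ) < 1 - F ^ 2 := by nlinarith
  have hp0 : (0:ℝ) < 1 + F := by linarith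
  have hqlo : (1 - δ) * x ^ 2 ≤ 1 - F := by
    nlinarith [mul_nonneg hδ0.le (by nlinarith : (0:ℝ) ≤ x ^ 2 - x ^ 4)]
  have hplo : 1 - δ ≤ 1 + F := by nlinarith [mul_nonneg hδ0.le (by nlinarith : (0:ℝ) ≤ x ^ 2 - x ^ 4)]
  -- matrix entries
  have hAinv : A⁻¹ = (1 - F ^ 2)⁻¹ • !![1, -F; -F, 1] := by
    rw [Matrix.inv_def, Matrix.adjugate_fin_two_of, hdet, Ring.inverse_eq_inv']
  have hμ0 : μv 0 = (1 - F^2)⁻¹ * (G - G * F) := by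
    simp [μv, B, hAinv, Matrix.mulVec, Matrix.mul_apply, Fin.sum_univ_two, dotProduct]
    ring
  have hμ1 : μv 1 = (1 - F^2)⁻¹ * (G * F - G) := by
    simp [μv, B, hAinv, Matrix.mulVec, Matrix.mul_apply, Fin.sum_univ_two, dotProduct]
    ring
  have hD0 : D 0 0 = 2 - (1 - F^2)⁻¹ * G^2 := by
    simp [D, B, hAinv, Matrix.mul_apply, Fin.sum_univ_two, hC0, Matrix.vecHead, Matrix.vecTail]
    ring
  have hD1 : D 1 1 = 2 - (1 - F^2)⁻¹ * G^2 := by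
    simp [D, B, hAinv, Matrix.mul_apply, Fin.sum_univ_two, hC1, Matrix.vecHead, Matrix.vecTail]
    ring
  have hμ0' : μv 0 = G / (1 + F) := by
    rw [hμ0, inv_mul_eq_div, div_eq_div_iff hd0.ne' hp0.ne']; ring
  rw [show (μv 1)^4 = (μv 0)^4 from by rw [hμ0, hμ1]; ring,
    show D 1 1 = D 0 0 from by rw [hD0, hD1], max_self, hdet, div_lt_iff₀ hd0]
  apply max_lt
  · -- μ part
    rw [show 200 / (1-δ)^6 * x^2 * (1-F^2) = 200*x^2*(1-F^2) / (1-δ)^6 from by ring,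
      lt_div_iff₀ h6, ← mul_lt_mul_iff_left₀ (pow_pos hp0 4)]
    have key : μv 0 ^ 4 * (1-δ)^6 * (1+F)^4 = G^4 * (1-δ)^6 := by
      rw [hμ0']; field_simp
    rw [key]
    have hG4 : G ^ 4 < 81 * x ^ 4 := by
      nlinarith [mul_pos (by nlinarith : (0:ℝ) < 3*x - G) (by nlinarith : (0:ℝ) < 3*x + G),
        sq_nonneg G, sq_nonneg x, mul_pos hx0 hx0]
    have e1 : (1-δ)^5 ≤ (1+F)^5 := pow_le_pow_left₀ h1δ.le hplo 5
    have e2 : ((1-δ)*x^2) * (1-δ)^5 ≤ (1-F) * (1+F)^5 :=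
      mul_le_mul hqlo e1 (by positivity) (by linarith)
    have e3 : 200*x^2 * (((1-δ)*x^2) * (1-δ)^5) ≤ 200*x^2 * ((1-F) * (1+F)^5) :=
      mul_le_mul_of_nonneg_left e2 (by positivity)
    linarith [e3, mul_lt_mul_of_pos_right hG4 h6, mul_pos hx40 h6]
  · -- D part
    rw [show 200 / (1-δ)^6 * x^2 * (1-F^2) = 200*x^2*(1-F^2) / (1-δ)^6 from by ring,
      lt_div_iff₀ h6, ← mul_lt_mul_iff_left₀ (pow_pos hd0 2)]
    have key : D 0 0 ^ 2 * (1-δ)^6 * (1-F^2)^2 = (2*(1-F^2) - G^2)^2 * (1-δ)^6 := by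
      rw [hD0]; field_simp
    rw [key]
    have hNu : 2*(1-F^2) - G^2 < 13 * x^4 := by
      linarith [mul_pos (by linarith : (0:ℝ) < x^4 - (F-1+x^2)) (by linarith : (0:ℝ) < 1 - x^2),
        mul_pos (by linarith : (0:ℝ) < x^4 + (F-1+x^2)) (by linarith : (0:ℝ) < 1 - x^2),
        mul_pos (by linarith : (0:ℝ) < x^4 - (F-1+x^2)) (by linarith : (0:ℝ) < x^4 + (F-1+x^2)),
        mul_pos (by linarith : (0:ℝ) < x^3 - (G+2*x)) (by linarith : (0:ℝ) < x^3 + (G+2*x)),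
        mul_pos (by linarith : (0:ℝ) < x^3 - (G+2*x)) hx0,
        mul_pos (by linarith : (0:ℝ) < x^3 + (G+2*x)) hx0,
        sq_nonneg (F-1+x^2), sq_nonneg (G+2*x), pow_nonneg hx0.le 6]
    have hNl : -(13 * x^4) < 2*(1-F^2) - G^2 := by
      linarith [mul_pos (by linarith : (0:ℝ) < x^4 - (F-1+x^2)) (by linarith : (0:ℝ) < 1 - x^2),
        mul_pos (by linarith : (0:ℝ) < x^4 + (F-1+x^2)) (by linarith : (0:ℝ) < 1 - x^2),
        mul_pos (by linarith : (0:ℝ) < x^4 - (F-1+x^2)) (by linarith : (0:ℝ) < x^4 + (F-1+x^2)),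
        mul_pos (by linarith : (0:ℝ) < x^3 - (G+2*x)) (by linarith : (0:ℝ) < x^3 + (G+2*x)),
        mul_pos (by linarith : (0:ℝ) < x^3 - (G+2*x)) hx0,
        mul_pos (by linarith : (0:ℝ) < x^3 + (G+2*x)) hx0,
        sq_nonneg (F-1+x^2), sq_nonneg (G+2*x), pow_nonneg hx0.le 6]
    have hN2 : (2*(1-F^2) - G^2)^2 < 169 * x^8 := by
      linarith [mul_pos (by linarith : (0:ℝ) < 13*x^4 - (2*(1-F^2)-G^2))
        (by linarith : (0:ℝ) < 13*x^4 + (2*(1-F^2)-G^2))]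
    have hdlo : (1-δ)^2 * x^2 ≤ 1 - F^2 := by linarith [mul_le_mul hqlo hplo (by linarith) (by linarith)]
    have hcube : ((1-δ)^2*x^2)^3 ≤ (1-F^2)^3 := pow_le_pow_left₀ (by positivity) hdlo 3
    have e3 : 200*x^2 * (((1-δ)^2*x^2)^3) ≤ 200*x^2 * ((1-F^2)^3) :=
      mul_le_mul_of_nonneg_left hcube (by positivity)
    linarith [e3, mul_lt_mul_of_pos_right hN2 h6, mul_pos (pow_pos hx0 8) h6]
end

section
/- There exists δ > 0 such that the following holds for every cone K in ℝ² with centre x, axis u and angle θ satisfying |θ − π/2| ≤ δ. If either (1) the two endpoints (0, 1/2) and (0, −1/2) of the common edge e lie in different connected components of the exterior of K, or (2) one endpoint of e lies in the exterior of K and the other endpoint lies within Euclidean distance δ of the centre x, then each of the hexagons H₁ and H₂ has at least one vertex lying in the interior of K. -/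
set_option maxHeartbeats 1000000

open scoped RealInnerProductSpace

/-- The point of the plane with coordinates `(a, b)`. -/
noncomputable def pt (a b : ℝ) : EuclideanSpace ℝ (Fin 2) :=
  (WithLp.equiv 2 (Fin 2 → ℝ)).symm ![a, b]

/-- The vertex set of the regular hexagon `H₁` of side length `1`. -/
noncomputable def hexVerts₁ : Set (EuclideanSpace ℝ (Fin 2)) :=
  {pt 0 (1 / 2), pt (Real.sqrt 3 / 2) 1, pt (Real.sqrt 3) (1 / 2),
    pt (Real.sqrt 3) (-(1 / 2)), pt (Real.sqrt 3 / 2) (-1), pt 0 (-(1 / 2))}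

/-- The vertex set of the adjacent regular hexagon `H₂` (the reflection of `H₁` in the
`y`-axis). -/
noncomputable def hexVerts₂ : Set (EuclideanSpace ℝ (Fin 2)) :=
  {pt 0 (1 / 2), pt (-(Real.sqrt 3 / 2)) 1, pt (-Real.sqrt 3) (1 / 2),
    pt (-Real.sqrt 3) (-(1 / 2)), pt (-(Real.sqrt 3 / 2)) (-1), pt 0 (-(1 / 2))}

/-- The closed double cone with centre `x`, axis `u` and angle `θ`. -/
def cone (x u : EuclideanSpace ℝ (Fin 2)) (θ : ℝ) : Set (EuclideanSpace ℝ (Fin 2)) :=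
  {y | ‖y - x‖ * Real.cos (θ / 2) ≤ |⟪y - x, u⟫|}

/-- The interior of the double cone with centre `x`, axis `u` and angle `θ`. -/
def coneInt (x u : EuclideanSpace ℝ (Fin 2)) (θ : ℝ) : Set (EuclideanSpace ℝ (Fin 2)) :=
  {y | y ≠ x ∧ ‖y - x‖ * Real.cos (θ / 2) < |⟪y - x, u⟫|}

section Helpers

private lemma hexlb1 (p q : ℝ) (h : p^2+q^2=1) (h0 : 0 ≤ p) (hq : -(1/20) ≤ q) (h2 : q ≤ 1/2) :
    6/7 ≤ p := by
  nlinarith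

private lemma hexlbq (a b : ℝ) (h : a^2 + b^2 = 1) (h1 : -(1/20) ≤ b) (h2 : a^2 ≤ 1/4) :
    6/7 ≤ b := by
  nlinarith

private lemma linMap (p q : ℝ) :
    IsLinearMap ℝ (fun y : EuclideanSpace ℝ (Fin 2) => p * y 0 + q * y 1) := by
  constructor
  · intro a b
    simp only [PiLp.add_apply]
    ring
  · intro c a
    simp only [PiLp.smul_apply, smul_eq_mul]
    ring

private lemma connComp (K : Set (EuclideanSpace ℝ (Fin 2)))
    (f g : EuclideanSpace ℝ (Fin 2) → ℝ) (hf : IsLinearMap ℝ f) (hg : IsLinearMap ℝ g)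
    (c1 c2 : ℝ) (hsub : {y | c1 < f y ∧ c2 < g y} ⊆ Kᶜ)
    (a b : EuclideanSpace ℝ (Fin 2))
    (ha : c1 < f a ∧ c2 < g a) (hb : c1 < f b ∧ c2 < g b) :
    b ∈ connectedComponentIn Kᶜ a := by
  have hconv : Convex ℝ {y | c1 < f y ∧ c2 < g y} :=
    (convex_halfSpace_gt hf c1).inter (convex_halfSpace_gt hg c2)
  exact hconv.isPreconnected.subset_connectedComponentIn ha hsub hb

end Helpers

lemma claimPP1 (t p q r s : ℝ) (ht : t^2 = 3) (ht0 : 0 ≤ t)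
    (hp : p^2+q^2=1) (hr : r^2+s^2=1)
    (hc : p*r + q*s ≤ 1/20) (hq : -(1/20) ≤ q) (hs : -(1/20) ≤ s)
    (h1 : q ≤ t*p + 1/10) (h2 : s ≤ t*r + 1/10) (hp0 : 0 ≤ p) (hr0 : 0 ≤ r) : False := by
  have ht1 : 5/3 ≤ t := by nlinarith
  have ht2 : t ≤ 7/4 := by nlinarith
  have hq1 : q ≤ 1 := by nlinarith
  have hs1 : s ≤ 1 := by nlinarith
  rcases le_or_gt q (1/2) with hq2 | hq2 <;> rcases le_or_gt s (1/2) with hs2 | hs2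
  · have hP : 6/7 ≤ p := hexlb1 p q hp hp0 hq hq2
    have hR : 6/7 ≤ r := hexlb1 r s hr hr0 hs hs2
    have e1 : (0:ℝ) ≤ (q + 1/20) * (s + 1/20) := by
      apply mul_nonneg <;> linarith
    have e2 : (0:ℝ) ≤ (p - 6/7) * (r - 6/7) := by
      apply mul_nonneg <;> linarith
    nlinarith [e1, e2]
  · have hP : 6/7 ≤ p := hexlb1 p q hp hp0 hq hq2
    have hR : 8/35 ≤ r := by nlinarith [mul_le_mul_of_nonneg_right ht2 hr0]
    have e2 : (0:ℝ) ≤ (p - 6/7) * (r - 8/35) := by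
      apply mul_nonneg <;> linarith
    nlinarith [e2, mul_le_mul_of_nonneg_left hs1 (show (0:ℝ) ≤ q + 1/20 by linarith)]
  · have hR : 6/7 ≤ r := hexlb1 r s hr hr0 hs hs2
    have hP : 8/35 ≤ p := by nlinarith [mul_le_mul_of_nonneg_right ht2 hp0]
    have e2 : (0:ℝ) ≤ (r - 6/7) * (p - 8/35) := by
      apply mul_nonneg <;> linarith
    nlinarith [e2, mul_le_mul_of_nonneg_left hq1 (show (0:ℝ) ≤ s + 1/20 by linarith)]
  · nlinarith [mul_nonneg hp0 hr0, mul_pos (show (0:ℝ) < q by linarith) (show (0:ℝ) < s by linarith)]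

lemma claimNN1 (t p q r s : ℝ) (ht : t^2 = 3) (ht0 : 0 ≤ t)
    (hp : p^2+q^2=1) (hr : r^2+s^2=1)
    (hc : p*r + q*s ≤ 1/20) (hq : -(1/20) ≤ q) (hs : -(1/20) ≤ s)
    (h1 : -(1/10) ≤ t*p + 3*q) (h2 : -(1/10) ≤ t*r + 3*s) (hp0 : p ≤ 0) (hr0 : r ≤ 0) : False := by
  have ht1 : 5/3 ≤ t := by nlinarith
  have ht2 : t ≤ 7/4 := by nlinarith
  rcases le_or_gt (-(1/2)) p with hP | hP <;> rcases le_or_gt (-(1/2)) r with hR | hR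
  · have hQ : 6/7 ≤ q := hexlbq p q hp hq (by nlinarith)
    have hS : 6/7 ≤ s := hexlbq r s hr hs (by nlinarith)
    nlinarith [mul_nonneg (neg_nonneg.2 hp0) (neg_nonneg.2 hr0),
      mul_nonneg (by linarith : (0:ℝ) ≤ q - 6/7) (by linarith : (0:ℝ) ≤ s - 6/7)]
  · have hQ : 6/7 ≤ q := hexlbq p q hp hq (by nlinarith)
    have hS : 11/45 ≤ s := by nlinarith [mul_le_mul_of_nonpos_right ht1 hr0]
    nlinarith [mul_nonneg (neg_nonneg.2 hp0) (neg_nonneg.2 hr0),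
      mul_nonneg (by linarith : (0:ℝ) ≤ q - 6/7) (by linarith : (0:ℝ) ≤ s - 11/45)]
  · have hS : 6/7 ≤ s := hexlbq r s hr hs (by nlinarith)
    have hQ : 11/45 ≤ q := by nlinarith [mul_le_mul_of_nonpos_right ht1 hp0]
    nlinarith [mul_nonneg (neg_nonneg.2 hp0) (neg_nonneg.2 hr0),
      mul_nonneg (by linarith : (0:ℝ) ≤ s - 6/7) (by linarith : (0:ℝ) ≤ q - 11/45)]
  · have hQ : 11/45 ≤ q := by nlinarith [mul_le_mul_of_nonpos_right ht1 hp0]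
    have hS : 11/45 ≤ s := by nlinarith [mul_le_mul_of_nonpos_right ht1 hr0]
    nlinarith [mul_pos (by linarith : (0:ℝ) < -p) (by linarith : (0:ℝ) < -r),
      mul_nonneg (by linarith : (0:ℝ) ≤ q - 11/45) (by linarith : (0:ℝ) ≤ s - 11/45)]

lemma claimPP2 (t p q r s : ℝ) (ht : t^2 = 3) (ht0 : 0 ≤ t)
    (hp : p^2+q^2=1) (hr : r^2+s^2=1)
    (hc : p*r + q*s ≤ 1/20) (hs : -(1/20) ≤ s)
    (h1 : t*p < 3*q) (hp0 : 0 ≤ p) (hr0 : 0 ≤ r) : 1/2 < q ∧ s ≤ 1/10 ∧ 9/10 ≤ r := by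
  have ht1 : 5/3 ≤ t := by nlinarith
  have hq2 : 1/2 < q := by nlinarith [mul_nonneg ht0 hp0, sq_nonneg (t*p)]
  have hs2 : s ≤ 1/10 := by nlinarith [mul_nonneg hp0 hr0]
  have hr2 : 9/10 ≤ r := by nlinarith
  exact ⟨hq2, hs2, hr2⟩

lemma claimNN2 (t p q r s : ℝ) (ht : t^2 = 3) (ht0 : 0 ≤ t)
    (hp : p^2+q^2=1) (hr : r^2+s^2=1)
    (hc : p*r + q*s ≤ 1/20) (hq : -(1/20) ≤ q) (hs : -(1/20) ≤ s)
    (h1 : q < -(t*p)) (h2 : s < -(t*r)) (hp0 : p ≤ 0) (hr0 : r ≤ 0) : False := by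
  have hq1 : q ≤ 1 := by nlinarith
  have hs1 : s ≤ 1 := by nlinarith
  have hP : p ≤ -(1/2) := by
    rcases le_or_gt 0 q with h | h
    · nlinarith
    · nlinarith
  have hR : r ≤ -(1/2) := by
    rcases le_or_gt 0 s with h | h
    · nlinarith
    · nlinarith
  rcases le_or_gt 0 q with h | h <;> rcases le_or_gt 0 s with h' | h'
  · nlinarith [mul_nonneg h h', mul_pos (by linarith : (0:ℝ) < -p) (by linarith : (0:ℝ) < -r)]
  · have hR2 : r ≤ -(19/20) := by nlinarith
    have : q * s ≥ -(1/20) := by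
      have := mul_le_mul_of_nonneg_left hs h
      linarith
    nlinarith [mul_pos (by linarith : (0:ℝ) < -p) (by linarith : (0:ℝ) < -r)]
  · have hP2 : p ≤ -(19/20) := by nlinarith
    have : q * s ≥ -(1/20) := by
      have := mul_le_mul_of_nonpos_left hs1 (le_of_lt h)
      linarith
    nlinarith [mul_pos (by linarith : (0:ℝ) < -p) (by linarith : (0:ℝ) < -r)]
  · have : q * s ≥ 0 := le_of_lt (mul_pos_of_neg_of_neg h h')
    nlinarith [mul_pos (by linarith : (0:ℝ) < -p) (by linarith : (0:ℝ) < -r)]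

lemma claimMixR (t p q r s : ℝ) (ht : t^2 = 3) (ht0 : 0 ≤ t)
    (hp : p^2+q^2=1) (hr : r^2+s^2=1)
    (hc : p*r + q*s ≤ 1/20) (hs : -(1/20) ≤ s)
    (hSR : -(t*r) ≤ s + 1/20) (hp0 : 0 ≤ p) (hr0 : r ≤ 0) : q ≤ t*p := by
  have ht1 : 5/3 ≤ t := by nlinarith
  have hp1 : p ≤ 1 := by nlinarith
  have s1 : -r ≤ 11/20 := by nlinarith [mul_le_mul_of_nonpos_right ht1 hr0]
  have s2 : 4/5 ≤ s := by nlinarith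
  have s3 : q ≤ 3/4 := by
    nlinarith [mul_le_mul (le_refl (1:ℝ)) s1 (by linarith) (by norm_num : (0:ℝ) ≤ 1),
      mul_le_mul hp1 (le_refl (-r)) (by linarith) (by norm_num : (0:ℝ) ≤ 1)]
  rcases le_or_gt q 0 with h | h
  · nlinarith [mul_nonneg ht0 hp0]
  · nlinarith [mul_nonneg ht0 hp0]

lemma claimMixS (t p q r s : ℝ) (ht : t^2 = 3) (ht0 : 0 ≤ t)
    (hp : p^2+q^2=1) (hr : r^2+s^2=1)
    (hc : p*r + q*s ≤ 1/20) (hs : -(1/20) ≤ s)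
    (hTR : -(t*r) ≤ 1/20) (hp0 : 0 ≤ p) (hr0 : r ≤ 0) : 3*q ≤ t*p ∧ 9/10 ≤ s := by
  have ht1 : 5/3 ≤ t := by nlinarith
  have s1 : -r ≤ 3/100 := by nlinarith [mul_le_mul_of_nonpos_right ht1 hr0]
  have s2 : 9/10 ≤ s := by nlinarith
  have hp1 : p ≤ 1 := by nlinarith
  have s3 : q ≤ 1/10 := by nlinarith [mul_le_mul hp1 (le_refl (-r)) (by linarith) (by norm_num : (0:ℝ) ≤ 1)]
  refine ⟨?_, s2⟩
  rcases le_or_gt q 0 with h | h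
  · nlinarith [mul_nonneg ht0 hp0]
  · nlinarith [mul_nonneg ht0 hp0]

lemma coreAux (t p q r s h1 h2 : ℝ) (ht : t^2 = 3) (ht0 : 0 ≤ t)
    (hp : p^2+q^2=1) (hr : r^2+s^2=1) (hperp : |p*r+q*s| ≤ 1/20)
    (ha1 : 0 < q/2 - h1) (ha2 : 0 < s/2 - h2)
    (hb1 : -(q/2) - h1 ≤ 1/20) (hb2 : -(s/2) - h2 ≤ 1/20)
    (hor : 0 ≤ p ∨ r < 0) :
    (p*(t/2)+q*1-h1)*(r*(t/2)+s*1-h2) < 0 ∨ (p*t+q*(1/2)-h1)*(r*t+s*(1/2)-h2) < 0 ∨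
    (p*t+q*(-(1/2))-h1)*(r*t+s*(-(1/2))-h2) < 0 ∨ (p*(t/2)+q*(-1)-h1)*(r*(t/2)+s*(-1)-h2) < 0 := by
  have hcu : p*r + q*s ≤ 1/20 := (abs_le.1 hperp).2
  have hq20 : -(1/20) ≤ q := by linarith
  have hs20 : -(1/20) ≤ s := by linarith
  rcases le_or_gt 0 p with hp0 | hp0
  · rcases le_or_gt 0 r with hr0 | hr0
    · -- PP : vertex S
      refine Or.inr (Or.inr (Or.inr ?_))
      rcases lt_trichotomy (p*(t/2)+q*(-1)-h1) 0 with hS | hS | hS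
      · -- E1 < 0 : show E2 > 0
        have h3 : t*p < 3*q := by nlinarith
        obtain ⟨c1, c2, c3⟩ := claimPP2 t p q r s ht ht0 hp hr hcu hs20 h3 hp0 hr0
        have hrt : (9:ℝ)/10 * (5/3) ≤ r * t := by
          have ht1 : 5/3 ≤ t := by nlinarith
          exact mul_le_mul c3 ht1 (by norm_num) (by linarith)
        have hE2 : 0 < r*(t/2)+s*(-1)-h2 := by nlinarith
        exact mul_neg_of_neg_of_pos hS hE2
      · -- E1 = 0 : contradiction
        exfalso
        have h3 : t*p < 3*q := by nlinarith
        obtain ⟨c1, c2, c3⟩ := claimPP2 t p q r s ht ht0 hp hr hcu hs20 h3 hp0 hr0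
        -- also E1 = 0 gives q ≤ t*p + 1/10 : then PP1 contradiction needs E2 side... simpler:
        -- from c1 : 1/2 < q and h3..., plus E1 = 0 : p*(t/2) = q + h1 ≥ q + ... 
        have h4 : q ≤ t*p + 1/10 := by nlinarith
        -- claimPP1 needs s ≤ t*r + 1/10 : from c2, c3 : t*r ≥ (9/10)(5/3) = 3/2 ≥ s + 1/10.
        have ht1 : 5/3 ≤ t := by nlinarith
        have hrt : (9:ℝ)/10 * (5/3) ≤ r * t := mul_le_mul c3 ht1 (by norm_num) (by linarith)
        exact claimPP1 t p q r s ht ht0 hp hr hcu hq20 hs20 h4 (by nlinarith) hp0 hr0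
      · -- E1 > 0 : show E2 < 0
        have h4 : q ≤ t*p + 1/10 := by nlinarith
        have hE2 : r*(t/2)+s*(-1)-h2 < 0 := by
          by_contra hcon
          push_neg at hcon
          have h5 : s ≤ t*r + 1/10 := by nlinarith
          exact claimPP1 t p q r s ht ht0 hp hr hcu hq20 hs20 h4 h5 hp0 hr0
        exact mul_neg_of_pos_of_neg hS hE2
    · -- p ≥ 0 > r : mixed
      rcases lt_or_ge (r*t+s*(1/2)-h2) 0 with hQ | hQ
      · refine Or.inr (Or.inl ?_)
        have hE1 : 0 < p*t+q*(1/2)-h1 := by nlinarith [mul_nonneg hp0 ht0]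
        exact mul_neg_of_pos_of_neg hE1 hQ
      · rcases lt_or_ge (r*t+s*(-(1/2))-h2) 0 with hR2 | hR2
        · refine Or.inr (Or.inr (Or.inl ?_))
          have hSR : -(t*r) ≤ s + 1/20 := by nlinarith
          have hqtp : q ≤ t*p := claimMixR t p q r s ht ht0 hp hr hcu hs20 hSR hp0 (le_of_lt hr0)
          have hE1 : 0 < p*t+q*(-(1/2))-h1 := by nlinarith
          exact mul_neg_of_pos_of_neg hE1 hR2
        · refine Or.inr (Or.inr (Or.inr ?_))
          have hTR : -(t*r) ≤ 1/20 := by nlinarith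
          obtain ⟨c1, c2⟩ := claimMixS t p q r s ht ht0 hp hr hcu hs20 hTR hp0 (le_of_lt hr0)
          have hE1 : 0 < p*(t/2)+q*(-1)-h1 := by nlinarith
          have hE2 : r*(t/2)+s*(-1)-h2 < 0 := by nlinarith [mul_nonneg (neg_nonneg.2 (le_of_lt hr0)) ht0]
          exact mul_neg_of_pos_of_neg hE1 hE2
  · rcases hor with hor | hr0
    · exact absurd hor (not_le.2 hp0)
    · -- NN : vertex P
      refine Or.inl ?_
      rcases lt_trichotomy (p*(t/2)+q*1-h1) 0 with hP | hP | hP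
      · -- E1 < 0 : show E2 > 0 via NN2 contradiction
        have hE2 : 0 < r*(t/2)+s*1-h2 := by
          by_contra hcon
          push_neg at hcon
          have d1 : q < -(t*p) := by nlinarith
          have d2 : s < -(t*r) := by nlinarith
          exact claimNN2 t p q r s ht ht0 hp hr hcu hq20 hs20 d1 d2 (le_of_lt hp0) (le_of_lt hr0)
        exact mul_neg_of_neg_of_pos hP hE2
      · exfalso
        -- E1 = 0 : both NN1-hyp and NN2-hyp hold for line 1
        have d1 : -(1/10) ≤ t*p + 3*q := by nlinarith
        have d1' : q < -(t*p) := by nlinarith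
        rcases lt_or_ge (r*(t/2)+s*1-h2) 0 with hC | hC
        · have d2' : s < -(t*r) := by nlinarith
          exact claimNN2 t p q r s ht ht0 hp hr hcu hq20 hs20 d1' d2' (le_of_lt hp0) (le_of_lt hr0)
        · have d2 : -(1/10) ≤ t*r + 3*s := by nlinarith
          exact claimNN1 t p q r s ht ht0 hp hr hcu hq20 hs20 d1 d2 (le_of_lt hp0) (le_of_lt hr0)
      · have hE2 : r*(t/2)+s*1-h2 < 0 := by
          by_contra hcon
          push_neg at hcon
          have d1 : -(1/10) ≤ t*p + 3*q := by nlinarith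
          have d2 : -(1/10) ≤ t*r + 3*s := by nlinarith
          exact claimNN1 t p q r s ht ht0 hp hr hcu hq20 hs20 d1 d2 (le_of_lt hp0) (le_of_lt hr0)
        exact mul_neg_of_pos_of_neg hP hE2

lemma core (t p q r s h1 h2 : ℝ) (ht : t^2 = 3) (ht0 : 0 ≤ t)
    (hp : p^2+q^2=1) (hr : r^2+s^2=1) (hperp : |p*r+q*s| ≤ 1/20)
    (ha1 : 0 < q/2 - h1) (ha2 : 0 < s/2 - h2)
    (hb1 : -(q/2) - h1 ≤ 1/20) (hb2 : -(s/2) - h2 ≤ 1/20) :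
    (p*(t/2)+q*1-h1)*(r*(t/2)+s*1-h2) < 0 ∨ (p*t+q*(1/2)-h1)*(r*t+s*(1/2)-h2) < 0 ∨
    (p*t+q*(-(1/2))-h1)*(r*t+s*(-(1/2))-h2) < 0 ∨ (p*(t/2)+q*(-1)-h1)*(r*(t/2)+s*(-1)-h2) < 0 := by
  rcases le_or_gt 0 p with hp0 | hp0
  · exact coreAux t p q r s h1 h2 ht ht0 hp hr hperp ha1 ha2 hb1 hb2 (Or.inl hp0)
  · rcases lt_or_ge r 0 with hr0 | hr0
    · exact coreAux t p q r s h1 h2 ht ht0 hp hr hperp ha1 ha2 hb1 hb2 (Or.inr hr0)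
    · have hperp' : |r*p+s*q| ≤ 1/20 := by rwa [show r*p+s*q = p*r+q*s by ring]
      rcases coreAux t r s p q h2 h1 ht ht0 hr hp hperp' ha2 ha1 hb2 hb1 (Or.inl hr0) with
        h | h | h | h
      · exact Or.inl (by rwa [mul_comm] at h)
      · exact Or.inr (Or.inl (by rwa [mul_comm] at h))
      · exact Or.inr (Or.inr (Or.inl (by rwa [mul_comm] at h)))
      · exact Or.inr (Or.inr (Or.inr (by rwa [mul_comm] at h)))

lemma realTotal (t p q r s h1 h2 : ℝ) (ht : t^2 = 3) (ht0 : 0 ≤ t)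
    (hp : p^2+q^2=1) (hr : r^2+s^2=1) (hperp : |p*r+q*s| ≤ 1/20)
    (hcase :
      (0 < (q/2-h1)*(s/2-h2) ∧ 0 < (-(q/2)-h1)*(-(s/2)-h2) ∧ (q/2-h1)*(-(q/2)-h1) < 0)
      ∨ (0 < (q/2-h1)*(s/2-h2) ∧ |(-(q/2)-h1)| ≤ 1/20 ∧ |(-(s/2)-h2)| ≤ 1/20)
      ∨ (0 < (-(q/2)-h1)*(-(s/2)-h2) ∧ |q/2-h1| ≤ 1/20 ∧ |s/2-h2| ≤ 1/20)) :
    ((p*(t/2)+q*1-h1)*(r*(t/2)+s*1-h2) < 0 ∨ (p*t+q*(1/2)-h1)*(r*t+s*(1/2)-h2) < 0 ∨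
     (p*t+q*(-(1/2))-h1)*(r*t+s*(-(1/2))-h2) < 0 ∨ (p*(t/2)+q*(-1)-h1)*(r*(t/2)+s*(-1)-h2) < 0)
    ∧
    ((p*(-(t/2))+q*1-h1)*(r*(-(t/2))+s*1-h2) < 0 ∨ (p*(-t)+q*(1/2)-h1)*(r*(-t)+s*(1/2)-h2) < 0 ∨
     (p*(-t)+q*(-(1/2))-h1)*(r*(-t)+s*(-(1/2))-h2) < 0 ∨
     (p*(-(t/2))+q*(-1)-h1)*(r*(-(t/2))+s*(-1)-h2) < 0) := by
  have flip : ∀ {X Y : ℝ}, X < 0 → X = Y → Y < 0 := fun hx he => he ▸ hx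
  have hp2 : (-p)^2+q^2=1 := by linear_combination hp
  have hr2 : (-r)^2+s^2=1 := by linear_combination hr
  have hp3 : p^2+(-q)^2=1 := by linear_combination hp
  have hr3 : r^2+(-s)^2=1 := by linear_combination hr
  have hp4 : (-p)^2+(-q)^2=1 := by linear_combination hp
  have hr4 : (-r)^2+(-s)^2=1 := by linear_combination hr
  have e1 : |(-p)*(-r)+q*s| ≤ 1/20 := by rwa [show (-p)*(-r)+q*s = p*r+q*s by ring]
  have e2 : |p*r+(-q)*(-s)| ≤ 1/20 := by rwa [show p*r+(-q)*(-s) = p*r+q*s by ring]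
  have e3 : |(-p)*(-r)+(-q)*(-s)| ≤ 1/20 := by rwa [show (-p)*(-r)+(-q)*(-s) = p*r+q*s by ring]
  rcases hcase with ⟨hpa, hpb, hopp⟩ | ⟨hpa, hab1, hab2⟩ | ⟨hpb, haa1, haa2⟩
  · -- case 1
    rcases lt_trichotomy (q/2-h1) 0 with hGa1 | hGa1 | hGa1
    · -- Ga1 < 0 : Ga2 < 0, Gb1 > 0, Gb2 > 0 ; use y-flip
      have hGa2 : s/2-h2 < 0 := by nlinarith
      have hGb1 : 0 < -(q/2)-h1 := by nlinarith
      have hGb2 : 0 < -(s/2)-h2 := by nlinarith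
      constructor
      · rcases core t p (-q) r (-s) h1 h2 ht ht0 hp3 hr3 e2
          (by rw [show (-q)/2 - h1 = -(q/2)-h1 by ring]; exact hGb1)
          (by rw [show (-s)/2 - h2 = -(s/2)-h2 by ring]; exact hGb2)
          (by rw [show -((-q)/2) - h1 = q/2-h1 by ring]; linarith)
          (by rw [show -((-s)/2) - h2 = s/2-h2 by ring]; linarith) with h | h | h | h
        · exact Or.inr (Or.inr (Or.inr (flip h (by ring))))
        · exact Or.inr (Or.inr (Or.inl (flip h (by ring))))
        · exact Or.inr (Or.inl (flip h (by ring)))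
        · exact Or.inl (flip h (by ring))
      · rcases core t (-p) (-q) (-r) (-s) h1 h2 ht ht0 hp4 hr4 e3
          (by rw [show (-q)/2 - h1 = -(q/2)-h1 by ring]; exact hGb1)
          (by rw [show (-s)/2 - h2 = -(s/2)-h2 by ring]; exact hGb2)
          (by rw [show -((-q)/2) - h1 = q/2-h1 by ring]; linarith)
          (by rw [show -((-s)/2) - h2 = s/2-h2 by ring]; linarith) with h | h | h | h
        · exact Or.inr (Or.inr (Or.inr (flip h (by ring))))
        · exact Or.inr (Or.inr (Or.inl (flip h (by ring))))
        · exact Or.inr (Or.inl (flip h (by ring)))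
        · exact Or.inl (flip h (by ring))
    · exfalso; rw [hGa1, zero_mul] at hpa; exact lt_irrefl 0 hpa
    · -- Ga1 > 0 : Ga2 > 0, Gb1 < 0, Gb2 < 0 ; plain
      have hGa2 : 0 < s/2-h2 := by nlinarith
      have hGb1 : -(q/2)-h1 < 0 := by nlinarith
      have hGb2 : -(s/2)-h2 < 0 := by nlinarith
      constructor
      · exact core t p q r s h1 h2 ht ht0 hp hr hperp hGa1 hGa2 (by linarith) (by linarith)
      · rcases core t (-p) q (-r) s h1 h2 ht ht0 hp2 hr2 e1 hGa1 hGa2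
          (by linarith) (by linarith) with h | h | h | h
        · exact Or.inl (flip h (by ring))
        · exact Or.inr (Or.inl (flip h (by ring)))
        · exact Or.inr (Or.inr (Or.inl (flip h (by ring))))
        · exact Or.inr (Or.inr (Or.inr (flip h (by ring))))
  · -- case 2 : a exterior, b near centre
    have hb1 := abs_le.1 hab1
    have hb2 := abs_le.1 hab2
    rcases lt_trichotomy (q/2-h1) 0 with hGa1 | hGa1 | hGa1
    · have hGa2 : s/2-h2 < 0 := by nlinarith
      constructor
      · rcases core t (-p) (-q) (-r) (-s) (-h1) (-h2) ht ht0 hp4 hr4 e3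
          (by rw [show (-q)/2 - (-h1) = -(q/2-h1) by ring]; linarith)
          (by rw [show (-s)/2 - (-h2) = -(s/2-h2) by ring]; linarith)
          (by rw [show -((-q)/2) - (-h1) = -(-(q/2)-h1) by ring]; linarith)
          (by rw [show -((-s)/2) - (-h2) = -(-(s/2)-h2) by ring]; linarith) with h | h | h | h
        · exact Or.inl (flip h (by ring))
        · exact Or.inr (Or.inl (flip h (by ring)))
        · exact Or.inr (Or.inr (Or.inl (flip h (by ring))))
        · exact Or.inr (Or.inr (Or.inr (flip h (by ring))))
      · rcases core t p (-q) r (-s) (-h1) (-h2) ht ht0 hp3 hr3 e2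
          (by rw [show (-q)/2 - (-h1) = -(q/2-h1) by ring]; linarith)
          (by rw [show (-s)/2 - (-h2) = -(s/2-h2) by ring]; linarith)
          (by rw [show -((-q)/2) - (-h1) = -(-(q/2)-h1) by ring]; linarith)
          (by rw [show -((-s)/2) - (-h2) = -(-(s/2)-h2) by ring]; linarith) with h | h | h | h
        · exact Or.inl (flip h (by ring))
        · exact Or.inr (Or.inl (flip h (by ring)))
        · exact Or.inr (Or.inr (Or.inl (flip h (by ring))))
        · exact Or.inr (Or.inr (Or.inr (flip h (by ring))))
    · exfalso; rw [hGa1, zero_mul] at hpa; exact lt_irrefl 0 hpa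
    · have hGa2 : 0 < s/2-h2 := by nlinarith
      constructor
      · exact core t p q r s h1 h2 ht ht0 hp hr hperp hGa1 hGa2 (by linarith) (by linarith)
      · rcases core t (-p) q (-r) s h1 h2 ht ht0 hp2 hr2 e1 hGa1 hGa2
          (by linarith) (by linarith) with h | h | h | h
        · exact Or.inl (flip h (by ring))
        · exact Or.inr (Or.inl (flip h (by ring)))
        · exact Or.inr (Or.inr (Or.inl (flip h (by ring))))
        · exact Or.inr (Or.inr (Or.inr (flip h (by ring))))
  · -- case 2' : b exterior, a near centre  (y-flip)
    have ha1 := abs_le.1 haa1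
    have ha2 := abs_le.1 haa2
    rcases lt_trichotomy (-(q/2)-h1) 0 with hGb1 | hGb1 | hGb1
    · have hGb2 : -(s/2)-h2 < 0 := by nlinarith
      constructor
      · rcases core t (-p) q (-r) s (-h1) (-h2) ht ht0 hp2 hr2 e1
          (by rw [show q/2 - (-h1) = -(-(q/2)-h1) by ring]; linarith)
          (by rw [show s/2 - (-h2) = -(-(s/2)-h2) by ring]; linarith)
          (by rw [show -(q/2) - (-h1) = -(q/2-h1) by ring]; linarith)
          (by rw [show -(s/2) - (-h2) = -(s/2-h2) by ring]; linarith) with h | h | h | h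
        · exact Or.inr (Or.inr (Or.inr (flip h (by ring))))
        · exact Or.inr (Or.inr (Or.inl (flip h (by ring))))
        · exact Or.inr (Or.inl (flip h (by ring)))
        · exact Or.inl (flip h (by ring))
      · rcases core t p q r s (-h1) (-h2) ht ht0 hp hr hperp
          (by rw [show q/2 - (-h1) = -(-(q/2)-h1) by ring]; linarith)
          (by rw [show s/2 - (-h2) = -(-(s/2)-h2) by ring]; linarith)
          (by rw [show -(q/2) - (-h1) = -(q/2-h1) by ring]; linarith)
          (by rw [show -(s/2) - (-h2) = -(s/2-h2) by ring]; linarith) with h | h | h | h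
        · exact Or.inr (Or.inr (Or.inr (flip h (by ring))))
        · exact Or.inr (Or.inr (Or.inl (flip h (by ring))))
        · exact Or.inr (Or.inl (flip h (by ring)))
        · exact Or.inl (flip h (by ring))
    · exfalso; rw [hGb1, zero_mul] at hpb; exact lt_irrefl 0 hpb
    · have hGb2 : 0 < -(s/2)-h2 := by nlinarith
      constructor
      · rcases core t p (-q) r (-s) h1 h2 ht ht0 hp3 hr3 e2
          (by rw [show (-q)/2 - h1 = -(q/2)-h1 by ring]; exact hGb1)
          (by rw [show (-s)/2 - h2 = -(s/2)-h2 by ring]; exact hGb2)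
          (by rw [show -((-q)/2) - h1 = q/2-h1 by ring]; linarith)
          (by rw [show -((-s)/2) - h2 = s/2-h2 by ring]; linarith) with h | h | h | h
        · exact Or.inr (Or.inr (Or.inr (flip h (by ring))))
        · exact Or.inr (Or.inr (Or.inl (flip h (by ring))))
        · exact Or.inr (Or.inl (flip h (by ring)))
        · exact Or.inl (flip h (by ring))
      · rcases core t (-p) (-q) (-r) (-s) h1 h2 ht ht0 hp4 hr4 e3
          (by rw [show (-q)/2 - h1 = -(q/2)-h1 by ring]; exact hGb1)
          (by rw [show (-s)/2 - h2 = -(s/2)-h2 by ring]; exact hGb2)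
          (by rw [show -((-q)/2) - h1 = q/2-h1 by ring]; linarith)
          (by rw [show -((-s)/2) - h2 = s/2-h2 by ring]; linarith) with h | h | h | h
        · exact Or.inr (Or.inr (Or.inr (flip h (by ring))))
        · exact Or.inr (Or.inr (Or.inl (flip h (by ring))))
        · exact Or.inr (Or.inl (flip h (by ring)))
        · exact Or.inl (flip h (by ring))

lemma bridge (x u : EuclideanSpace ℝ (Fin 2)) (θ : ℝ) (hu : ‖u‖ = 1)
    (hθ0 : 0 < θ) (hθπ : θ < Real.pi) :
    ∃ p q r s h1 h2 : ℝ,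
      p^2+q^2 = 1 ∧ r^2+s^2 = 1 ∧ p*r + q*s = Real.cos θ ∧
      (∀ y : EuclideanSpace ℝ (Fin 2), y ∉ cone x u θ →
        0 < (p*(y 0)+q*(y 1)-h1)*(r*(y 0)+s*(y 1)-h2)) ∧
      (∀ y : EuclideanSpace ℝ (Fin 2), (p*(y 0)+q*(y 1)-h1)*(r*(y 0)+s*(y 1)-h2) < 0 →
        y ∈ coneInt x u θ) ∧
      (∀ y : EuclideanSpace ℝ (Fin 2), 0 < (p*(y 0)+q*(y 1)-h1)*(r*(y 0)+s*(y 1)-h2) →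
        y ∉ cone x u θ) ∧
      (∀ y : EuclideanSpace ℝ (Fin 2),
        |p*(y 0)+q*(y 1)-h1| ≤ dist y x ∧ |r*(y 0)+s*(y 1)-h2| ≤ dist y x) := by
  have hπ := Real.pi_pos
  set c := Real.cos (θ/2) with hcdef
  set sn := Real.sin (θ/2) with hsndef
  have hc : 0 < c := Real.cos_pos_of_mem_Ioo ⟨by linarith, by linarith⟩
  have hsn : 0 < sn := Real.sin_pos_of_pos_of_lt_pi (by linarith) (by linarith)
  have hcs : c^2 + sn^2 = 1 := by rw [add_comm]; exact Real.sin_sq_add_cos_sq (θ/2)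
  have huu : (u 0)^2 + (u 1)^2 = 1 := by
    have h2 : Real.sqrt ((u 0)^2 + (u 1)^2) = 1 := by
      rw [EuclideanSpace.norm_eq] at hu
      simpa [Fin.sum_univ_two, Real.norm_eq_abs, sq_abs] using hu
    have h3 := congrArg (· ^ 2) h2
    simpa [Real.sq_sqrt (by positivity : (0:ℝ) ≤ (u 0)^2 + (u 1)^2)] using h3
  set p := -(c*u 1) - sn*u 0 with hpd
  set q := c*u 0 - sn*u 1 with hqd
  set r := sn*u 0 - c*u 1 with hrd
  set s := sn*u 1 + c*u 0 with hsd
  set h1 := p*x 0 + q*x 1 with h1d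
  set h2 := r*x 0 + s*x 1 with h2d
  -- per-point computations
  have hin : ∀ y : EuclideanSpace ℝ (Fin 2),
      ⟪y - x, u⟫ = (y 0 - x 0) * u 0 + (y 1 - x 1) * u 1 := by
    intro y
    simp [PiLp.inner_apply, Fin.sum_univ_two, PiLp.sub_apply, RCLike.inner_apply, conj_trivial]; ring
  have hD : ∀ y : EuclideanSpace ℝ (Fin 2),
      ‖y - x‖^2 = (y 0 - x 0)^2 + (y 1 - x 1)^2 := by
    intro y
    rw [EuclideanSpace.norm_eq, Real.sq_sqrt (by positivity)]
    simp [Fin.sum_univ_two, PiLp.sub_apply, sq_abs]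
  have hE1 : ∀ y : EuclideanSpace ℝ (Fin 2), p*(y 0)+q*(y 1)-h1 =
      c*(-(y 0 - x 0)*u 1 + (y 1 - x 1)*u 0) - sn*((y 0 - x 0)*u 0 + (y 1 - x 1)*u 1) := by
    intro y; rw [hpd, hqd, h1d, hpd, hqd]; ring
  have hE2 : ∀ y : EuclideanSpace ℝ (Fin 2), r*(y 0)+s*(y 1)-h2 =
      c*(-(y 0 - x 0)*u 1 + (y 1 - x 1)*u 0) + sn*((y 0 - x 0)*u 0 + (y 1 - x 1)*u 1) := by
    intro y; rw [hrd, hsd, h2d, hrd, hsd]; ring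
  have hαβ : ∀ y : EuclideanSpace ℝ (Fin 2),
      ((y 0 - x 0)*u 0 + (y 1 - x 1)*u 1)^2 + (-(y 0 - x 0)*u 1 + (y 1 - x 1)*u 0)^2
        = (y 0 - x 0)^2 + (y 1 - x 1)^2 := by
    intro y; linear_combination ((y 0 - x 0)^2 + (y 1 - x 1)^2) * huu
  refine ⟨p, q, r, s, h1, h2, ?_, ?_, ?_, ?_, ?_, ?_, ?_⟩
  · rw [hpd, hqd]; linear_combination ((u 0)^2+(u 1)^2) * hcs + huu
  · rw [hrd, hsd]; linear_combination ((u 0)^2+(u 1)^2) * hcs + huu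
  · have h4 := Real.cos_two_mul (θ/2)
    rw [show 2*(θ/2) = θ by ring, ← hcdef] at h4
    rw [h4, hpd, hqd, hrd, hsd]
    linear_combination (c^2 - sn^2) * huu - hcs
  · -- keyC
    intro y hy
    have hlt : |⟪y - x, u⟫| < ‖y - x‖ * c := not_le.mp hy
    rw [hin y] at hlt
    set α := (y 0 - x 0)*u 0 + (y 1 - x 1)*u 1 with hα
    set β := -(y 0 - x 0)*u 1 + (y 1 - x 1)*u 0 with hβ
    have h5 := mul_self_lt_mul_self (abs_nonneg α) hlt
    rw [abs_mul_abs_self] at h5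
    have h6 : ‖y - x‖^2 * c^2 = ((y 0 - x 0)^2 + (y 1 - x 1)^2) * c^2 := by rw [hD y]
    have h7 : α*α < ((y 0 - x 0)^2 + (y 1 - x 1)^2) * c^2 := by nlinarith [h5, h6]
    rw [hE1 y, hE2 y, ← hα, ← hβ]
    have m1 := hαβ y
    rw [← hα, ← hβ] at m1
    nlinarith [h7, m1, hcs]
  · -- keyI
    intro y hy
    have hz : p*(x 0)+q*(x 1)-h1 = 0 := by rw [h1d]; ring
    constructor
    · intro heq
      rw [heq, hz, zero_mul] at hy
      exact lt_irrefl 0 hy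
    · rw [hE1 y, hE2 y] at hy
      set α := (y 0 - x 0)*u 0 + (y 1 - x 1)*u 1 with hα
      set β := -(y 0 - x 0)*u 1 + (y 1 - x 1)*u 0 with hβ
      have m1 := hαβ y
      rw [← hα, ← hβ] at m1
      have h7 : ‖y - x‖^2 * c^2 < α^2 := by
        rw [hD y]; nlinarith [hy, m1, hcs]
      rw [hin y, ← hα]
      have h8 : (‖y - x‖ * c)^2 < |α|^2 := by rw [sq_abs]; nlinarith [h7]
      exact lt_of_pow_lt_pow_left₀ 2 (abs_nonneg α) h8
  · -- keyW
    intro y hy hmem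
    have hle : ‖y - x‖ * c ≤ |⟪y - x, u⟫| := hmem
    rw [hin y] at hle
    rw [hE1 y, hE2 y] at hy
    set α := (y 0 - x 0)*u 0 + (y 1 - x 1)*u 1 with hα
    set β := -(y 0 - x 0)*u 1 + (y 1 - x 1)*u 0 with hβ
    have m1 := hαβ y
    rw [← hα, ← hβ] at m1
    have h5 := mul_self_le_mul_self (mul_nonneg (norm_nonneg _) hc.le) hle
    rw [abs_mul_abs_self] at h5
    have h6 : ((y 0 - x 0)^2 + (y 1 - x 1)^2) * c^2 ≤ α*α := by
      nlinarith [h5, hD y]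
    nlinarith [hy, m1, hcs, h6]
  · -- dist bounds
    intro y
    have key : ∀ A B : ℝ, (c*B - sn*A)^2 + (sn*B + c*A)^2 = A^2 + B^2 := by
      intro A B; linear_combination (A^2+B^2)*hcs
    have hdd : (dist y x)^2 = (y 0 - x 0)^2 + (y 1 - x 1)^2 := by
      rw [EuclideanSpace.dist_eq, Real.sq_sqrt (by positivity)]
      simp [Fin.sum_univ_two, Real.dist_eq, sq_abs]
    have hd0 : 0 ≤ dist y x := dist_nonneg
    have m := hαβ y
    have k := key ((y 0 - x 0)*u 0 + (y 1 - x 1)*u 1) (-(y 0 - x 0)*u 1 + (y 1 - x 1)*u 0)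
    have k2 : ∀ A B : ℝ, (c*B + sn*A)^2 + (sn*B - c*A)^2 = A^2 + B^2 := by
      intro A B; linear_combination (A^2+B^2)*hcs
    have kk2 := k2 ((y 0 - x 0)*u 0 + (y 1 - x 1)*u 1) (-(y 0 - x 0)*u 1 + (y 1 - x 1)*u 0)
    constructor
    · have h9 : (p*(y 0)+q*(y 1)-h1)^2 ≤ (dist y x)^2 := by
        rw [hE1 y, hdd]
        linarith [k, m, sq_nonneg (sn*(-(y 0 - x 0)*u 1 + (y 1 - x 1)*u 0) +
          c*((y 0 - x 0)*u 0 + (y 1 - x 1)*u 1))]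
      calc |p*(y 0)+q*(y 1)-h1| = Real.sqrt ((p*(y 0)+q*(y 1)-h1)^2) :=
            (Real.sqrt_sq_eq_abs _).symm
        _ ≤ Real.sqrt ((dist y x)^2) := Real.sqrt_le_sqrt h9
        _ = dist y x := Real.sqrt_sq hd0
    · have h9 : (r*(y 0)+s*(y 1)-h2)^2 ≤ (dist y x)^2 := by
        rw [hE2 y, hdd]
        linarith [kk2, m, sq_nonneg (sn*(-(y 0 - x 0)*u 1 + (y 1 - x 1)*u 0) -
          c*((y 0 - x 0)*u 0 + (y 1 - x 1)*u 1))]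
      calc |r*(y 0)+s*(y 1)-h2| = Real.sqrt ((r*(y 0)+s*(y 1)-h2)^2) :=
            (Real.sqrt_sq_eq_abs _).symm
        _ ≤ Real.sqrt ((dist y x)^2) := Real.sqrt_le_sqrt h9
        _ = dist y x := Real.sqrt_sq hd0


/-- Cones at near-right angles are `visible' on the vertices of two
adjacent regular hexagons: there is `δ > 0` such that for every cone `K` with centre `x`,
unit axis `u` and angle `θ` with `|θ - π/2| ≤ δ`, if either (1) the endpoints
`(0, ±1/2)` of the common edge lie in different connected components of the exterior of
`K`, or (2) one endpoint lies in the exterior of `K` and the other within distance `δ`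
of `x`, then each hexagon has a vertex in the interior of `K`. -/
theorem cone_visible_on_hexagons :
    ∃ δ > (0 : ℝ), ∀ (x u : EuclideanSpace ℝ (Fin 2)) (θ : ℝ),
      ‖u‖ = 1 → 0 < θ → θ < Real.pi → |θ - Real.pi / 2| ≤ δ →
      ((pt 0 (1 / 2) ∈ (cone x u θ)ᶜ ∧ pt 0 (-(1 / 2)) ∈ (cone x u θ)ᶜ ∧
          pt 0 (-(1 / 2)) ∉ connectedComponentIn (cone x u θ)ᶜ (pt 0 (1 / 2))) ∨
        (pt 0 (1 / 2) ∈ (cone x u θ)ᶜ ∧ dist (pt 0 (-(1 / 2))) x ≤ δ) ∨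
        (pt 0 (-(1 / 2)) ∈ (cone x u θ)ᶜ ∧ dist (pt 0 (1 / 2)) x ≤ δ)) →
      (∃ w ∈ hexVerts₁, w ∈ coneInt x u θ) ∧ (∃ w ∈ hexVerts₂, w ∈ coneInt x u θ) := by
  refine ⟨1/20, by norm_num, ?_⟩
  intro x u θ hu hθ0 hθπ hθδ hyp
  obtain ⟨p, q, r, s, h1, h2, hp, hr, hpr, keyC, keyI, keyW, hdist⟩ := bridge x u θ hu hθ0 hθπ
  have hperp : |p*r+q*s| ≤ 1/20 := by
    rw [hpr]
    calc |Real.cos θ| = |Real.sin (Real.pi/2 - θ)| := by rw [Real.sin_pi_div_two_sub]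
      _ ≤ |Real.pi/2 - θ| := Real.abs_sin_le_abs
      _ = |θ - Real.pi/2| := abs_sub_comm _ _
      _ ≤ 1/20 := hθδ
  set t := Real.sqrt 3 with htdef
  have ht : t^2 = 3 := Real.sq_sqrt (by norm_num)
  have ht0 : 0 ≤ t := Real.sqrt_nonneg 3
  have pa0 : ∀ a b : ℝ, (pt a b) 0 = a := fun a b => rfl
  have pa1 : ∀ a b : ℝ, (pt a b) 1 = b := fun a b => rfl
  -- the subset facts for the connectivity argument
  have hsubP : {y : EuclideanSpace ℝ (Fin 2) | h1 < p * y 0 + q * y 1 ∧ h2 < r * y 0 + s * y 1}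
      ⊆ (cone x u θ)ᶜ := by
    intro y hy
    obtain ⟨hy1, hy2⟩ := hy
    exact keyW y (mul_pos (by linarith) (by linarith))
  have hsubN : {y : EuclideanSpace ℝ (Fin 2) |
      -h1 < (-p) * y 0 + (-q) * y 1 ∧ -h2 < (-r) * y 0 + (-s) * y 1} ⊆ (cone x u θ)ᶜ := by
    intro y hy
    obtain ⟨hy1, hy2⟩ := hy
    exact keyW y (mul_pos_of_neg_of_neg (by linarith) (by linarith))
  have hcase :
      (0 < (q/2-h1)*(s/2-h2) ∧ 0 < (-(q/2)-h1)*(-(s/2)-h2) ∧ (q/2-h1)*(-(q/2)-h1) < 0)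
      ∨ (0 < (q/2-h1)*(s/2-h2) ∧ |(-(q/2)-h1)| ≤ 1/20 ∧ |(-(s/2)-h2)| ≤ 1/20)
      ∨ (0 < (-(q/2)-h1)*(-(s/2)-h2) ∧ |q/2-h1| ≤ 1/20 ∧ |s/2-h2| ≤ 1/20) := by
    rcases hyp with ⟨haC, hbC, hcc⟩ | ⟨haC, hbd⟩ | ⟨hbC, had⟩
    · left
      have hPa := keyC _ haC
      have hPb := keyC _ hbC
      rw [pa0, pa1] at hPa hPb
      have hPa' : 0 < (q/2-h1)*(s/2-h2) := by
        have e : (q/2-h1)*(s/2-h2) = (p*0+q*(1/2)-h1)*(r*0+s*(1/2)-h2) := by ring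
        rw [e]; exact hPa
      have hPb' : 0 < (-(q/2)-h1)*(-(s/2)-h2) := by
        have e : (-(q/2)-h1)*(-(s/2)-h2) = (p*0+q*(-(1/2))-h1)*(r*0+s*(-(1/2))-h2) := by ring
        rw [e]; exact hPb
      refine ⟨hPa', hPb', ?_⟩
      rcases lt_trichotomy (q/2-h1) 0 with hs1 | hs1 | hs1
      · have ha2n : s/2-h2 < 0 := by nlinarith [hPa']
        rcases lt_trichotomy (-(q/2)-h1) 0 with hs2 | hs2 | hs2
        · exfalso
          apply hcc
          have hb2n : -(s/2)-h2 < 0 := by nlinarith [hPb']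
          refine connComp (cone x u θ) _ _ (linMap (-p) (-q)) (linMap (-r) (-s))
            (-h1) (-h2) hsubN _ _ ⟨?_, ?_⟩ ⟨?_, ?_⟩ <;>
            simp only [pa0, pa1] <;> linarith
        · exfalso; rw [hs2, zero_mul] at hPb'; exact lt_irrefl 0 hPb'
        · exact mul_neg_of_neg_of_pos hs1 hs2
      · exfalso; rw [hs1, zero_mul] at hPa'; exact lt_irrefl 0 hPa'
      · rcases lt_trichotomy (-(q/2)-h1) 0 with hs2 | hs2 | hs2
        · exact mul_neg_of_pos_of_neg hs1 hs2
        · exfalso; rw [hs2, zero_mul] at hPb'; exact lt_irrefl 0 hPb'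
        · exfalso
          apply hcc
          have ha2p : 0 < s/2-h2 := by nlinarith [hPa']
          have hb2p : 0 < -(s/2)-h2 := by nlinarith [hPb']
          refine connComp (cone x u θ) _ _ (linMap p q) (linMap r s)
            h1 h2 hsubP _ _ ⟨?_, ?_⟩ ⟨?_, ?_⟩ <;>
            simp only [pa0, pa1] <;> linarith
    · right; left
      have hPa := keyC _ haC
      rw [pa0, pa1] at hPa
      have hPa' : 0 < (q/2-h1)*(s/2-h2) := by
        have e : (q/2-h1)*(s/2-h2) = (p*0+q*(1/2)-h1)*(r*0+s*(1/2)-h2) := by ring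
        rw [e]; exact hPa
      have hd1 := (hdist (pt 0 (-(1/2)))).1
      have hd2 := (hdist (pt 0 (-(1/2)))).2
      rw [pa0, pa1] at hd1 hd2
      refine ⟨hPa', ?_, ?_⟩
      · rw [show -(q/2)-h1 = p*0+q*(-(1/2))-h1 by ring]
        exact le_trans hd1 hbd
      · rw [show -(s/2)-h2 = r*0+s*(-(1/2))-h2 by ring]
        exact le_trans hd2 hbd
    · right; right
      have hPb := keyC _ hbC
      rw [pa0, pa1] at hPb
      have hPb' : 0 < (-(q/2)-h1)*(-(s/2)-h2) := by
        have e : (-(q/2)-h1)*(-(s/2)-h2) = (p*0+q*(-(1/2))-h1)*(r*0+s*(-(1/2))-h2) := by ring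
        rw [e]; exact hPb
      have hd1 := (hdist (pt 0 (1/2))).1
      have hd2 := (hdist (pt 0 (1/2))).2
      rw [pa0, pa1] at hd1 hd2
      refine ⟨hPb', ?_, ?_⟩
      · rw [show q/2-h1 = p*0+q*(1/2)-h1 by ring]
        exact le_trans hd1 had
      · rw [show s/2-h2 = r*0+s*(1/2)-h2 by ring]
        exact le_trans hd2 had
  obtain ⟨Hd1, Hd2⟩ := realTotal t p q r s h1 h2 ht ht0 hp hr hperp hcase
  constructor
  · rcases Hd1 with h | h | h | h
    · refine ⟨pt (t/2) 1, ?_, keyI _ ?_⟩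
      · rw [htdef]
        simp only [hexVerts₁, Set.mem_insert_iff, Set.mem_singleton_iff]
        exact Or.inr (Or.inl trivial)
      · rw [pa0, pa1]; exact h
    · refine ⟨pt t (1/2), ?_, keyI _ ?_⟩
      · rw [htdef]
        simp only [hexVerts₁, Set.mem_insert_iff, Set.mem_singleton_iff]
        exact Or.inr (Or.inr (Or.inl trivial))
      · rw [pa0, pa1]; exact h
    · refine ⟨pt t (-(1/2)), ?_, keyI _ ?_⟩
      · rw [htdef]
        simp only [hexVerts₁, Set.mem_insert_iff, Set.mem_singleton_iff]
        exact Or.inr (Or.inr (Or.inr (Or.inl trivial)))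
      · rw [pa0, pa1]; exact h
    · refine ⟨pt (t/2) (-1), ?_, keyI _ ?_⟩
      · rw [htdef]
        simp only [hexVerts₁, Set.mem_insert_iff, Set.mem_singleton_iff]
        exact Or.inr (Or.inr (Or.inr (Or.inr (Or.inl trivial))))
      · rw [pa0, pa1]; exact h
  · rcases Hd2 with h | h | h | h
    · refine ⟨pt (-(t/2)) 1, ?_, keyI _ ?_⟩
      · rw [htdef]
        simp only [hexVerts₂, Set.mem_insert_iff, Set.mem_singleton_iff]
        exact Or.inr (Or.inl trivial)
      · rw [pa0, pa1]; exact h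
    · refine ⟨pt (-t) (1/2), ?_, keyI _ ?_⟩
      · rw [htdef]
        simp only [hexVerts₂, Set.mem_insert_iff, Set.mem_singleton_iff]
        exact Or.inr (Or.inr (Or.inl trivial))
      · rw [pa0, pa1]; exact h
    · refine ⟨pt (-t) (-(1/2)), ?_, keyI _ ?_⟩
      · rw [htdef]
        simp only [hexVerts₂, Set.mem_insert_iff, Set.mem_singleton_iff]
        exact Or.inr (Or.inr (Or.inr (Or.inl trivial)))
      · rw [pa0, pa1]; exact h
    · refine ⟨pt (-(t/2)) (-1), ?_, keyI _ ?_⟩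
      · rw [htdef]
        simp only [hexVerts₂, Set.mem_insert_iff, Set.mem_singleton_iff]
        exact Or.inr (Or.inr (Or.inr (Or.inr (Or.inl trivial))))
      · rw [pa0, pa1]; exact h
end

section
/- Let (M₁₁, M₂₂, M₁₂) be a centred Gaussian random vector in ℝ³ with covariance matrix [[3/2, 1/2, 0], [1/2, 3/2, 0], [0, 0, 1/2]] (i.e. E[M₁₁²] = E[M₂₂²] = 3/2, E[M₁₁M₂₂] = 1/2, E[M₁₂²] = 1/2, and M₁₂ is independent of (M₁₁, M₂₂)). Let λ₁ ≤ λ₂ be the eigenvalues of the random symmetric matrix M = [[M₁₁, M₁₂], [M₁₂, M₂₂]], i.e. λ_{1,2} = ((M₁₁ + M₂₂) ∓ √((M₁₁ − M₂₂)² + 4M₁₂²))/2. Then there exists a constant c > 0 such that for all δ₂, δ₃ > 0: P(|λ₁| < δ₂ and |λ₂| < δ₂ and |λ₁ + λ₂| < δ₃) ≤ c·δ₂²·δ₃. -/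
open MeasureTheory ProbabilityTheory Matrix

/-- The standard Gaussian measure on `ι → ℝ`. -/
noncomputable def stdGaussian (ι : Type*) [Fintype ι] : Measure (ι → ℝ) :=
  Measure.pi fun _ => gaussianReal 0 1


lemma gaussianReal_le_volume : ∀ s, gaussianReal 0 1 s ≤ (volume : Measure ℝ) s := by
  intro s
  have h : gaussianReal 0 1 ≤ (volume : Measure ℝ) := by
    rw [gaussianReal_of_var_ne_zero 0 one_ne_zero]
    nth_rewrite 2 [← withDensity_one (μ := (volume : Measure ℝ))]
    refine withDensity_mono (Filter.Eventually.of_forall fun x => ?_)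
    simp only [gaussianPDF_def, Pi.one_apply]
    refine ENNReal.ofReal_le_one.2 ?_
    rw [gaussianPDFReal]
    push_cast
    have h1 : (1:ℝ) ≤ Real.sqrt (2 * Real.pi * 1) := by
      rw [show (2 * Real.pi * 1 : ℝ) = 2 * Real.pi by ring]
      nlinarith [Real.sq_sqrt (by positivity : (0:ℝ) ≤ 2*Real.pi), Real.sqrt_nonneg (2*Real.pi),
        Real.pi_gt_three]
    have h2 : Real.exp (-(x - 0)^2 / (2*1)) ≤ 1 := by
      rw [Real.exp_le_one_iff]
      nlinarith [sq_nonneg (x - 0)]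
    have h3 : (Real.sqrt (2 * Real.pi * 1))⁻¹ ≤ 1 := by
      rw [inv_le_one_iff₀]; right; exact h1
    nlinarith [Real.exp_pos (-(x - 0)^2 / (2*1))]
  exact h s

lemma pi_measure_mono {ι : Type*} [Fintype ι] {α : ι → Type*} [∀ i, MeasurableSpace (α i)]
    {μ ν : ∀ i, Measure (α i)} [∀ i, SigmaFinite (μ i)] (h : ∀ i, ∀ t, μ i t ≤ ν i t) :
    ∀ s, Measure.pi μ s ≤ Measure.pi ν s := by
  intro s
  have key : (Measure.pi μ).toOuterMeasure ≤
      OuterMeasure.pi fun i => (ν i).toOuterMeasure := by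
    rw [OuterMeasure.le_pi]
    intro t _
    calc (Measure.pi μ).toOuterMeasure (Set.pi Set.univ t)
        = Measure.pi μ (Set.pi Set.univ t) := rfl
      _ = ∏ i, μ i (t i) := Measure.pi_pi μ t
      _ ≤ ∏ i, (ν i).toOuterMeasure (t i) := Finset.prod_le_prod' fun i _ => h i (t i)
  calc Measure.pi μ s = (Measure.pi μ).toOuterMeasure s := rfl
    _ ≤ OuterMeasure.pi (fun i => (ν i).toOuterMeasure) s := key s
    _ ≤ Measure.pi ν s := by
        rw [Measure.pi_def]
        exact le_toMeasure_apply _ _ s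

/-- Eigenvalue repulsion / small ball estimate for the Hessian of the
random plane wave. Let `(M₁₁, M₂₂, M₁₂)` be a centred Gaussian vector with covariance
`[[3/2, 1/2, 0], [1/2, 3/2, 0], [0, 0, 1/2]]` (realised as the image of the standard
Gaussian under a matrix `A₀` with `A₀ A₀ᵀ` equal to this covariance), and let
`λ₁ ≤ λ₂` be the eigenvalues of `[[M₁₁, M₁₂], [M₁₂, M₂₂]]`. Then there is `c > 0` with
`P(|λ₁| < δ₂, |λ₂| < δ₂, |λ₁ + λ₂| < δ₃) ≤ c δ₂² δ₃` for all `δ₂, δ₃ > 0`. -/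
theorem plane_wave_hessian_small_ball (A₀ : Matrix (Fin 3) (Fin 3) ℝ)
    (hA₀ : A₀ * A₀ᵀ = !![3/2, 1/2, 0; 1/2, 3/2, 0; 0, 0, 1/2]) :
    ∃ c > (0 : ℝ), ∀ δ₂ > (0 : ℝ), ∀ δ₃ > (0 : ℝ),
      ((stdGaussian (Fin 3)) {ω : Fin 3 → ℝ |
        |((A₀.mulVec ω 0 + A₀.mulVec ω 1) -
            Real.sqrt ((A₀.mulVec ω 0 - A₀.mulVec ω 1) ^ 2 + 4 * (A₀.mulVec ω 2) ^ 2)) / 2|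
          < δ₂ ∧
        |((A₀.mulVec ω 0 + A₀.mulVec ω 1) +
            Real.sqrt ((A₀.mulVec ω 0 - A₀.mulVec ω 1) ^ 2 + 4 * (A₀.mulVec ω 2) ^ 2)) / 2|
          < δ₂ ∧
        |((A₀.mulVec ω 0 + A₀.mulVec ω 1) -
            Real.sqrt ((A₀.mulVec ω 0 - A₀.mulVec ω 1) ^ 2 + 4 * (A₀.mulVec ω 2) ^ 2)) / 2 +
          ((A₀.mulVec ω 0 + A₀.mulVec ω 1) +
            Real.sqrt ((A₀.mulVec ω 0 - A₀.mulVec ω 1) ^ 2 + 4 * (A₀.mulVec ω 2) ^ 2)) / 2|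
          < δ₃}).toReal ≤ c * δ₂ ^ 2 * δ₃ := by
  refine ⟨8, by norm_num, fun δ₂ hδ₂ δ₃ hδ₃ => ?_⟩
  set B := !![(1:ℝ),1,0;1,-1,0;0,0,1] * A₀ with hB
  have hBmul : ∀ ω : Fin 3 → ℝ, B.mulVec ω =
      ![A₀.mulVec ω 0 + A₀.mulVec ω 1, A₀.mulVec ω 0 - A₀.mulVec ω 1, A₀.mulVec ω 2] := by
    intro ω
    funext i
    rw [hB, ← Matrix.mulVec_mulVec]
    fin_cases i <;>
      simp [Matrix.mulVec, dotProduct, Fin.sum_univ_three] <;> ring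
  have hdetA : (A₀.det) ^ 2 = 1 := by
    have h := congrArg Matrix.det hA₀
    rw [Matrix.det_mul, Matrix.det_transpose] at h
    rw [sq, h]
    simp [Matrix.det_fin_three]; norm_num
  have hdetB : |B.det| = 2 := by
    rw [hB, Matrix.det_mul, abs_mul]
    have h1 : Matrix.det !![(1:ℝ),1,0;1,-1,0;0,0,1] = -2 := by
      simp [Matrix.det_fin_three]; norm_num
    have h2 : |A₀.det| = 1 := by
      nlinarith [abs_nonneg A₀.det, sq_abs A₀.det]
    rw [h1, h2]
    norm_num
  set box : Set (Fin 3 → ℝ) :=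
    Set.pi Set.univ ![Set.Ioo (-δ₃) δ₃, Set.Ioo (-(2*δ₂)) (2*δ₂), Set.Ioo (-δ₂) δ₂] with hbox
  set f := Matrix.toLin' B with hf
  have hfdet : LinearMap.det f ≠ 0 := by
    rw [hf, LinearMap.det_toLin']
    intro h
    rw [h, abs_zero] at hdetB
    norm_num at hdetB
  -- inclusion of the event in the preimage of the box
  have hsub : {ω : Fin 3 → ℝ |
        |((A₀.mulVec ω 0 + A₀.mulVec ω 1) -
            Real.sqrt ((A₀.mulVec ω 0 - A₀.mulVec ω 1) ^ 2 + 4 * (A₀.mulVec ω 2) ^ 2)) / 2|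
          < δ₂ ∧
        |((A₀.mulVec ω 0 + A₀.mulVec ω 1) +
            Real.sqrt ((A₀.mulVec ω 0 - A₀.mulVec ω 1) ^ 2 + 4 * (A₀.mulVec ω 2) ^ 2)) / 2|
          < δ₂ ∧
        |((A₀.mulVec ω 0 + A₀.mulVec ω 1) -
            Real.sqrt ((A₀.mulVec ω 0 - A₀.mulVec ω 1) ^ 2 + 4 * (A₀.mulVec ω 2) ^ 2)) / 2 +
          ((A₀.mulVec ω 0 + A₀.mulVec ω 1) +
            Real.sqrt ((A₀.mulVec ω 0 - A₀.mulVec ω 1) ^ 2 + 4 * (A₀.mulVec ω 2) ^ 2)) / 2|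
          < δ₃} ⊆ f ⁻¹' box := by
    intro ω hω
    obtain ⟨h1, h2, h3⟩ := hω
    set S := A₀.mulVec ω 0 + A₀.mulVec ω 1 with hS
    set D := A₀.mulVec ω 0 - A₀.mulVec ω 1 with hD
    set m := A₀.mulVec ω 2 with hm
    set r := Real.sqrt (D ^ 2 + 4 * m ^ 2) with hr
    have hsum : (S - r) / 2 + (S + r) / 2 = S := by ring
    rw [hsum] at h3
    rw [abs_lt] at h1 h2 h3
    have hr0 : 0 ≤ r := Real.sqrt_nonneg _
    have hr2 : r ^ 2 = D ^ 2 + 4 * m ^ 2 := Real.sq_sqrt (by positivity)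
    have hrlt : r < 2 * δ₂ := by linarith [h2.2, h1.1]
    have hDlt : |D| < 2 * δ₂ := by
      rw [abs_lt]
      constructor <;> nlinarith
    have hmlt : |m| < δ₂ := by
      rw [abs_lt]
      constructor <;> nlinarith
    have hfω : f ω = ![S, D, m] := by
      rw [hf]
      simpa using hBmul ω
    rw [Set.mem_preimage, hfω, hbox, Set.mem_univ_pi]
    intro i
    fin_cases i <;> simp [Set.mem_Ioo, abs_lt] at h3 hDlt hmlt ⊢
    · exact h3
    · exact hDlt
    · exact hmlt
  -- measure computation
  have hvol_box : (volume : Measure (Fin 3 → ℝ)) box =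
      ENNReal.ofReal (2 * δ₃) * ENNReal.ofReal (4 * δ₂) * ENNReal.ofReal (2 * δ₂) := by
    rw [hbox, volume_pi, Measure.pi_pi, Fin.prod_univ_three]
    simp only [Matrix.cons_val_zero, Matrix.cons_val_one, Matrix.head_cons, Fin.isValue,
      Matrix.cons_val_two, Matrix.tail_cons, Real.volume_Ioo]
    rw [show δ₃ - -δ₃ = 2*δ₃ by ring, show 2*δ₂ - -(2*δ₂) = 4*δ₂ by ring,
      show δ₂ - -δ₂ = 2*δ₂ by ring]
  have hpre : (volume : Measure (Fin 3 → ℝ)) (f ⁻¹' box) ≤ ENNReal.ofReal (8 * δ₂ ^ 2 * δ₃) := by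
    rw [Measure.addHaar_preimage_linearMap volume hfdet box, hvol_box]
    have hd : |(LinearMap.det f)⁻¹| = 1/2 := by
      rw [abs_inv, hf, LinearMap.det_toLin', hdetB]
      norm_num
    rw [hd]
    rw [← ENNReal.ofReal_mul (by positivity), ← ENNReal.ofReal_mul (by positivity),
      ← ENNReal.ofReal_mul (by norm_num)]
    apply le_of_eq
    congr 1
    ring
  have hmono := pi_measure_mono
    (μ := fun _ : Fin 3 => gaussianReal 0 1) (ν := fun _ : Fin 3 => (volume : Measure ℝ))
    (fun _ => gaussianReal_le_volume)
  have hle : (stdGaussian (Fin 3)) {ω : Fin 3 → ℝ |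
        |((A₀.mulVec ω 0 + A₀.mulVec ω 1) -
            Real.sqrt ((A₀.mulVec ω 0 - A₀.mulVec ω 1) ^ 2 + 4 * (A₀.mulVec ω 2) ^ 2)) / 2|
          < δ₂ ∧
        |((A₀.mulVec ω 0 + A₀.mulVec ω 1) +
            Real.sqrt ((A₀.mulVec ω 0 - A₀.mulVec ω 1) ^ 2 + 4 * (A₀.mulVec ω 2) ^ 2)) / 2|
          < δ₂ ∧
        |((A₀.mulVec ω 0 + A₀.mulVec ω 1) -
            Real.sqrt ((A₀.mulVec ω 0 - A₀.mulVec ω 1) ^ 2 + 4 * (A₀.mulVec ω 2) ^ 2)) / 2 +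
          ((A₀.mulVec ω 0 + A₀.mulVec ω 1) +
            Real.sqrt ((A₀.mulVec ω 0 - A₀.mulVec ω 1) ^ 2 + 4 * (A₀.mulVec ω 2) ^ 2)) / 2|
          < δ₃} ≤ ENNReal.ofReal (8 * δ₂ ^ 2 * δ₃) := by
    calc _ ≤ (stdGaussian (Fin 3)) (f ⁻¹' box) := measure_mono hsub
      _ ≤ (volume : Measure (Fin 3 → ℝ)) (f ⁻¹' box) := by
          rw [_root_.stdGaussian, volume_pi]
          exact hmono _
      _ ≤ ENNReal.ofReal (8 * δ₂ ^ 2 * δ₃) := hpre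
  calc _ ≤ 8 * δ₂ ^ 2 * δ₃ := ENNReal.toReal_le_of_le_ofReal (by positivity) hle
    _ = 8 * δ₂ ^ 2 * δ₃ := rfl
end

section
/- Define V : ℝ² → ℝ⁴ by V(x, y) = (cos x, sin x, cos y, sin y). Let s₁ = (x₁, y₁) and s₂ = (x₂, y₂) be two distinct points of the square [0, π/2)², both different from (0, 0), and suppose it is not the case that both s₁ and s₂ lie on the diagonal line {(x, y) : y = x}. Then the three vectors V(0, 0), V(s₁), V(s₂) are linearly independent in ℝ⁴. -/
/-!
Write `a • V(0,0) + b • V(s₁) + c • V(s₂) = 0` as two relations `a + b e^{i s} + c e^{i t} = 0`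
between points of the unit circle, one for the `x`- and one for the `y`-coordinates. As
`s₁, s₂ ≠ (0, 0)`, a nontrivial relation has `b, c ≠ 0`. Taking
`|c e^{i t}|² = |a + b e^{i s}|²` gives `c² = a² + b² + 2ab cos s`, so comparing the two
relations yields `a = 0` or `x₁ = y₁` (and symmetrically `a = 0` or `x₂ = y₂`). Off the diagonal
this forces `a = 0`, and then `b e^{i x₁} = -c e^{i x₂}` with both angles in `[0, π)` forces
`x₁ = x₂`, and likewise `y₁ = y₂`.
-/

/-- The vector `V(x, y) = (cos x, sin x, cos y, sin y) ∈ ℝ⁴`. -/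
noncomputable def Vvec (x y : ℝ) : Fin 4 → ℝ :=
  ![Real.cos x, Real.sin x, Real.cos y, Real.sin y]

open Real Set

lemma lincomb_Vvec_eq_zero_iff {a b c x₁ y₁ x₂ y₂ : ℝ} :
    a • Vvec 0 0 + b • Vvec x₁ y₁ + c • Vvec x₂ y₂ = 0 ↔
      (a + b * cos x₁ + c * cos x₂ = 0 ∧ b * sin x₁ + c * sin x₂ = 0) ∧
        (a + b * cos y₁ + c * cos y₂ = 0 ∧ b * sin y₁ + c * sin y₂ = 0) := by
  simp [funext_iff, Fin.forall_fin_succ, Vvec, and_assoc]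

lemma eq_zero_of_mul_sin_eq_zero {c x y : ℝ} (hx : x ∈ Ico 0 π) (hy : y ∈ Ico 0 π)
    (hne : (x, y) ≠ (0, 0)) (h₁ : c * sin x = 0) (h₂ : c * sin y = 0) : c = 0 := by
  by_contra hc
  have eq_zero {z : ℝ} (hz : z ∈ Ico 0 π) (h : c * sin z = 0) : z = 0 :=
    (sin_eq_zero_iff_of_lt_of_lt (by linarith [hz.1, pi_pos]) hz.2).1
      ((mul_eq_zero.1 h).resolve_left hc)
  exact hne (Prod.ext (eq_zero hx h₁) (eq_zero hy h₂))

lemma sq_eq_of_cos_sin_relation {a b c s t : ℝ} (h₁ : a + b * cos s + c * cos t = 0)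
    (h₂ : b * sin s + c * sin t = 0) : c ^ 2 = a ^ 2 + b ^ 2 + 2 * a * b * cos s := by
  linear_combination (c * cos t - a - b * cos s) * h₁ + (c * sin t - b * sin s) * h₂ -
    c ^ 2 * sin_sq_add_cos_sq t + b ^ 2 * sin_sq_add_cos_sq s

lemma eq_zero_or_eq_of_cos_sin_relations {a b c s t s' t' : ℝ} (hb : b ≠ 0)
    (hs : s ∈ Icc 0 π) (hs' : s' ∈ Icc 0 π)
    (h₁ : a + b * cos s + c * cos t = 0) (h₂ : b * sin s + c * sin t = 0)
    (h₁' : a + b * cos s' + c * cos t' = 0) (h₂' : b * sin s' + c * sin t' = 0) :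
    a = 0 ∨ s = s' := by
  have key : a * b * (cos s - cos s') = 0 := by
    linear_combination (sq_eq_of_cos_sin_relation h₁' h₂' - sq_eq_of_cos_sin_relation h₁ h₂) / 2
  rcases mul_eq_zero.1 key with hab | hcos
  · exact .inl ((mul_eq_zero.1 hab).resolve_right hb)
  · exact .inr (injOn_cos hs hs' (sub_eq_zero.1 hcos))

lemma eq_of_cos_sin_relation {b c s t : ℝ} (hb : b ≠ 0) (hs : s ∈ Ico 0 π) (ht : t ∈ Ico 0 π)
    (h₁ : b * cos s + c * cos t = 0) (h₂ : b * sin s + c * sin t = 0) : s = t := by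
  have hsin : b * sin (t - s) = 0 := by
    rw [sin_sub]
    linear_combination sin t * h₁ - cos t * h₂
  have := (sin_eq_zero_iff_of_lt_of_lt (by linarith [hs.2, ht.1]) (by linarith [hs.1, ht.2])).1
    ((mul_eq_zero.1 hsin).resolve_left hb)
  linarith

lemma coeffs_eq_zero_of_cos_sin_relations {a b c x₁ y₁ x₂ y₂ : ℝ}
    (hx₁ : x₁ ∈ Ico 0 π) (hy₁ : y₁ ∈ Ico 0 π) (hx₂ : x₂ ∈ Ico 0 π) (hy₂ : y₂ ∈ Ico 0 π)
    (hdist : (x₁, y₁) ≠ (x₂, y₂)) (hne₁ : (x₁, y₁) ≠ (0, 0)) (hne₂ : (x₂, y₂) ≠ (0, 0))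
    (hdiag : ¬ (y₁ = x₁ ∧ y₂ = x₂))
    (hx : a + b * cos x₁ + c * cos x₂ = 0) (hx' : b * sin x₁ + c * sin x₂ = 0)
    (hy : a + b * cos y₁ + c * cos y₂ = 0) (hy' : b * sin y₁ + c * sin y₂ = 0) :
    a = 0 ∧ b = 0 ∧ c = 0 := by
  have hb : b = 0 := by
    by_contra hb
    have hc : c ≠ 0 := by
      rintro rfl
      exact hb (eq_zero_of_mul_sin_eq_zero hx₁ hy₁ hne₁ (by simpa using hx') (by simpa using hy'))
    have ha : a = 0 := by
      by_contra ha
      have hxy₁ := (eq_zero_or_eq_of_cos_sin_relations hb (Ico_subset_Icc_self hx₁)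
        (Ico_subset_Icc_self hy₁) hx hx' hy hy').resolve_left ha
      have hxy₂ := (eq_zero_or_eq_of_cos_sin_relations (c := b) (t := x₁) (t' := y₁) hc
        (Ico_subset_Icc_self hx₂) (Ico_subset_Icc_self hy₂) (by linarith) (by linarith)
        (by linarith) (by linarith)).resolve_left ha
      exact hdiag ⟨hxy₁.symm, hxy₂.symm⟩
    subst ha
    exact hdist (Prod.ext (eq_of_cos_sin_relation hb hx₁ hx₂ (by simpa using hx) hx')
      (eq_of_cos_sin_relation hb hy₁ hy₂ (by simpa using hy) hy'))
  subst hb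
  have hc : c = 0 :=
    eq_zero_of_mul_sin_eq_zero hx₂ hy₂ hne₂ (by simpa using hx') (by simpa using hy')
  subst hc
  exact ⟨by simpa using hx, rfl, rfl⟩

/-- If `s₁ = (x₁, y₁)` and `s₂ = (x₂, y₂)` are distinct points of
`[0, π/2)²`, both nonzero, and not both on the diagonal `y = x`, then the vectors
`V(0,0)`, `V(s₁)`, `V(s₂)` are linearly independent in `ℝ⁴`. -/
theorem linearIndependent_Vvec (x₁ y₁ x₂ y₂ : ℝ)
    (hx₁ : x₁ ∈ Set.Ico 0 (Real.pi / 2)) (hy₁ : y₁ ∈ Set.Ico 0 (Real.pi / 2))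
    (hx₂ : x₂ ∈ Set.Ico 0 (Real.pi / 2)) (hy₂ : y₂ ∈ Set.Ico 0 (Real.pi / 2))
    (hdist : (x₁, y₁) ≠ (x₂, y₂))
    (hne₁ : (x₁, y₁) ≠ (0, 0)) (hne₂ : (x₂, y₂) ≠ (0, 0))
    (hdiag : ¬ (y₁ = x₁ ∧ y₂ = x₂)) :
    LinearIndependent ℝ ![Vvec 0 0, Vvec x₁ y₁, Vvec x₂ y₂] := by
  have hsub : Ico 0 (π / 2) ⊆ Ico 0 π := Ico_subset_Ico_right (by linarith [pi_pos])
  rw [Fintype.linearIndependent_iff]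
  intro g hg
  rw [Fin.sum_univ_three] at hg
  obtain ⟨⟨hx, hx'⟩, hy, hy'⟩ := lincomb_Vvec_eq_zero_iff.1 hg
  obtain ⟨h₀, h₁, h₂⟩ := coeffs_eq_zero_of_cos_sin_relations (hsub hx₁) (hsub hy₁) (hsub hx₂)
    (hsub hy₂) hdist hne₁ hne₂ hdiag hx hx' hy hy'
  intro i
  fin_cases i <;> assumption
end
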